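/- Let μ, ν be Borel probability measures on the circle T = R/Z. Then the Kantorovich distance on the circle satisfies d_T(μ,ν) = min over s ∈ [0,1) of min{ d_X(μ_s^D, ν_s^D), d_X(μ_s^I, ν_s^I) }, where d_X is the Kantorovich distance on [0,1]. -/

import Mathlib

open MeasureTheory

/-- The Kantorovich (1-Wasserstein) distance for cost `ρ`. -/
noncomputable def kantorovich (ρ : ℝ → ℝ → ℝ) (μ ν : Measure ℝ) : ℝ :=
  sInf {c : ℝ | ∃ γ : Measure (ℝ × ℝ),
    γ.map Prod.fst = μ ∧ γ.map Prod.snd = ν ∧ c = ∫ p, ρ p.1 p.2 ∂γ}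

/-- The circle metric on `[0,1)`. -/
noncomputable def rhoT (x y : ℝ) : ℝ := min |x - y| (1 - |x - y|)

/-- `μ_s^D`: the circle measure `μ` (on `[0,1)`) cut at `s`, viewed on `[0,1]`;
the point `s` itself is sent to `1`. Its distribution function is
`F_μ(t+s) - F_μ(s)` on `[0,1-s)` and `1 + F_μ(t+s-1) - F_μ(s)` on `[1-s,1]`. -/
noncomputable def cutD (μ : Measure ℝ) (s : ℝ) : Measure ℝ :=
  μ.map (fun x => if x ≤ s then x - s + 1 else x - s)

/-- `μ_s^I`: as `cutD` but the point `s` is sent to `0` (left-limit version). -/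
noncomputable def cutI (μ : Measure ℝ) (s : ℝ) : Measure ℝ :=
  μ.map (fun x => if x < s then x - s + 1 else x - s)


theorem ProbabilityTheory.cdf_eq_toReal {μ : Measure ℝ} [IsProbabilityMeasure μ] (x : ℝ) :
    cdf μ x = (μ (Set.Iic x)).toReal := by
  rw [cdf_eq_real]; rfl

section AuxCircle
open Set Filter Topology ProbabilityTheory

/-- integrable from an a.e. bound on a finite measure -/
lemma aux_integrable_of_bound {X : Type*} [MeasurableSpace X] (κ : Measure X) [IsFiniteMeasure κ]
    {f : X → ℝ} (hf : AEStronglyMeasurable f κ) (C : ℝ) (h : ∀ᵐ x ∂κ, |f x| ≤ C) :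
    Integrable f κ :=
  Integrable.mono' (integrable_const C) hf (by simpa [Real.norm_eq_abs] using h)

lemma aux_meas_cdf (P : Measure ℝ) : Measurable (cdf P) :=
  (monotone_cdf P).measurable

lemma aux_compl_null (P : Measure ℝ) [IsProbabilityMeasure P] {A : Set ℝ}
    (hA : MeasurableSet A) (hP : P A = 1) : P Aᶜ = 0 := by
  rw [measure_compl hA (measure_ne_top P A), hP, measure_univ, tsub_self]

lemma aux_cdf_neg (P : Measure ℝ) [IsProbabilityMeasure P] (hP : P (Set.Icc 0 1) = 1)
    {t : ℝ} (ht : t < 0) : cdf P t = 0 := by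
  rw [cdf_eq_toReal]
  have : P (Set.Iic t) = 0 := by
    refine measure_mono_null (fun x hx => ?_) (aux_compl_null P measurableSet_Icc hP)
    simp only [Set.mem_compl_iff, Set.mem_Icc, not_and_or, not_le]
    left
    exact lt_of_le_of_lt hx ht
  simp [this]

lemma aux_cdf_one (P : Measure ℝ) [IsProbabilityMeasure P] (hP : P (Set.Icc 0 1) = 1)
    {t : ℝ} (ht : 1 ≤ t) : cdf P t = 1 := by
  rw [cdf_eq_toReal]
  have : P (Set.Iic t) = 1 := by
    refine le_antisymm prob_le_one ?_
    calc (1 : ENNReal) = P (Set.Icc 0 1) := hP.symm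
    _ ≤ P (Set.Iic t) := measure_mono (fun x hx => le_trans hx.2 ht)
  simp [this]

/-- the left limit of the cdf, as a function -/
noncomputable def Fom (P : Measure ℝ) (s : ℝ) : ℝ := (P (Set.Iio s)).toReal

lemma aux_setint_sub (A : Set ℝ) (hA : MeasurableSet A) {a b : ℝ} (h0 : 0 ≤ a) (hab : a ≤ b)
    (hb1 : b ≤ 1) (h1 : Set.Ioo a b ⊆ A) (h2 : A ⊆ Set.Icc a b) :
    ∫ t in Set.Ioo (0:ℝ) 1, A.indicator (fun _ => (1:ℝ)) t = b - a := by
  have h3 : volume (A ∩ Set.Ioo 0 1) = ENNReal.ofReal (b - a) := by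
    refine le_antisymm ?_ ?_
    · calc volume (A ∩ Set.Ioo 0 1) ≤ volume (Set.Icc a b) :=
            measure_mono (fun x hx => h2 hx.1)
      _ = ENNReal.ofReal (b - a) := Real.volume_Icc
    · calc ENNReal.ofReal (b - a) = volume (Set.Ioo a b) := Real.volume_Ioo.symm
      _ ≤ volume (A ∩ Set.Ioo 0 1) := measure_mono (fun x hx =>
          ⟨h1 hx, lt_of_le_of_lt h0 hx.1, lt_of_lt_of_le hx.2 hb1⟩)
  rw [MeasureTheory.integral_indicator hA, MeasureTheory.setIntegral_const,
    measureReal_def, Measure.restrict_apply hA, h3, smul_eq_mul, mul_one,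
    ENNReal.toReal_ofReal (by linarith)]

lemma aux_LC1' {x y : ℝ} (hx : x ∈ Set.Icc (0:ℝ) 1) (hy : y ∈ Set.Icc (0:ℝ) 1) (hxy : x ≤ y) :
    ∫ t in Set.Ioo (0:ℝ) 1, |(if x ≤ t then (1:ℝ) else 0) - (if y ≤ t then 1 else 0)| = y - x := by
  have hfun : ∀ t : ℝ, |(if x ≤ t then (1:ℝ) else 0) - (if y ≤ t then 1 else 0)|
      = (Set.Ico x y).indicator (fun _ => (1:ℝ)) t := by
    intro t
    rcases le_or_gt x t with h1 | h1
    · rcases le_or_gt y t with h2 | h2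
      · rw [if_pos h1, if_pos h2,
          Set.indicator_of_notMem (fun hm => absurd hm.2 (not_lt.mpr h2))]
        norm_num
      · rw [if_pos h1, if_neg (not_le.mpr h2), Set.indicator_of_mem (Set.mem_Ico.mpr ⟨h1, h2⟩)]
        norm_num
    · rw [if_neg (not_le.mpr h1), if_neg (fun h2 => absurd (le_trans hxy h2) (not_le.mpr h1)),
        Set.indicator_of_notMem (fun hm => absurd hm.1 (not_le.mpr h1))]
      norm_num
  simp_rw [hfun]
  exact aux_setint_sub _ measurableSet_Ico hx.1 hxy hy.2
    Set.Ioo_subset_Ico_self Set.Ico_subset_Icc_self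

lemma aux_LC1 {x y : ℝ} (hx : x ∈ Set.Icc (0:ℝ) 1) (hy : y ∈ Set.Icc (0:ℝ) 1) :
    ∫ t in Set.Ioo (0:ℝ) 1, |(if x ≤ t then (1:ℝ) else 0) - (if y ≤ t then 1 else 0)| = |x - y| := by
  rcases le_total x y with hxy | hxy
  · rw [aux_LC1' hx hy hxy, abs_of_nonpos (by linarith), neg_sub]
  · have : ∀ t : ℝ, |(if x ≤ t then (1:ℝ) else 0) - (if y ≤ t then 1 else 0)|
        = |(if y ≤ t then (1:ℝ) else 0) - (if x ≤ t then 1 else 0)| := fun t => abs_sub_comm _ _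
    simp_rw [this]
    rw [aux_LC1' hy hx hxy, abs_of_nonneg (by linarith)]

lemma aux_LC2' {x y : ℝ} (hx : x ∈ Set.Icc (0:ℝ) 1) (hy : y ∈ Set.Icc (0:ℝ) 1) (hxy : x ≤ y) :
    ∫ u in Set.Ioo (0:ℝ) 1, |(if u ≤ x then (1:ℝ) else 0) - (if u ≤ y then 1 else 0)| = y - x := by
  have hfun : ∀ u : ℝ, |(if u ≤ x then (1:ℝ) else 0) - (if u ≤ y then 1 else 0)|
      = (Set.Ioc x y).indicator (fun _ => (1:ℝ)) u := by
    intro u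
    rcases le_or_gt u x with h1 | h1
    · rw [if_pos h1, if_pos (le_trans h1 hxy),
        Set.indicator_of_notMem (fun hm => absurd hm.1 (not_lt.mpr h1))]
      norm_num
    · rcases le_or_gt u y with h2 | h2
      · rw [if_neg (not_le.mpr h1), if_pos h2, Set.indicator_of_mem (Set.mem_Ioc.mpr ⟨h1, h2⟩)]
        norm_num
      · rw [if_neg (not_le.mpr h1), if_neg (not_le.mpr h2),
          Set.indicator_of_notMem (fun hm => absurd hm.2 (not_le.mpr h2))]
        norm_num
  simp_rw [hfun]
  exact aux_setint_sub _ measurableSet_Ioc hx.1 hxy hy.2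
    Set.Ioo_subset_Ioc_self Set.Ioc_subset_Icc_self

lemma aux_LC2 {x y : ℝ} (hx : x ∈ Set.Icc (0:ℝ) 1) (hy : y ∈ Set.Icc (0:ℝ) 1) :
    ∫ u in Set.Ioo (0:ℝ) 1, |(if u ≤ x then (1:ℝ) else 0) - (if u ≤ y then 1 else 0)| = |x - y| := by
  rcases le_total x y with hxy | hxy
  · rw [aux_LC2' hx hy hxy, abs_of_nonpos (by linarith), neg_sub]
  · have : ∀ u : ℝ, |(if u ≤ x then (1:ℝ) else 0) - (if u ≤ y then 1 else 0)|
        = |(if u ≤ y then (1:ℝ) else 0) - (if u ≤ x then 1 else 0)| := fun u => abs_sub_comm _ _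
    simp_rw [this]
    rw [aux_LC2' hy hx hxy, abs_of_nonneg (by linarith)]

/-- transport direction indicator for the circle cost -/
noncomputable def cfun (p : ℝ × ℝ) : ℝ :=
  if 1/2 < p.2 - p.1 then 1 else if 1/2 < p.1 - p.2 then -1 else 0

lemma aux_meas_cfun : Measurable cfun := by
  unfold cfun
  refine Measurable.ite ?_ measurable_const (Measurable.ite ?_ measurable_const measurable_const)
  · exact measurableSet_lt measurable_const (by fun_prop)
  · exact measurableSet_lt measurable_const (by fun_prop)

lemma aux_cfun_bound (p : ℝ × ℝ) : |cfun p| ≤ 1 := by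
  unfold cfun; split_ifs <;> norm_num

lemma aux_layer_rho {x y : ℝ} (hx : x ∈ Set.Ico (0:ℝ) 1) (hy : y ∈ Set.Ico (0:ℝ) 1) :
    ∫ t in Set.Ioo (0:ℝ) 1,
      |(if x ≤ t then (1:ℝ) else 0) - (if y ≤ t then 1 else 0) - cfun (x, y)| = rhoT x y := by
  have hx' : x ∈ Set.Icc (0:ℝ) 1 := ⟨hx.1, hx.2.le⟩
  have hy' : y ∈ Set.Icc (0:ℝ) 1 := ⟨hy.1, hy.2.le⟩
  have hint : Integrable (fun t => (Set.Ico x y).indicator (fun _ => (1:ℝ)) t)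
      (volume.restrict (Set.Ioo (0:ℝ) 1)) := by
    refine aux_integrable_of_bound _ ?_ 1 (Filter.Eventually.of_forall fun t => ?_)
    · exact (Measurable.indicator measurable_const measurableSet_Ico).aestronglyMeasurable
    · by_cases h : t ∈ Set.Ico x y <;> simp [Set.indicator_apply, h]
  have hint' : Integrable (fun t => (Set.Ico y x).indicator (fun _ => (1:ℝ)) t)
      (volume.restrict (Set.Ioo (0:ℝ) 1)) := by
    refine aux_integrable_of_bound _ ?_ 1 (Filter.Eventually.of_forall fun t => ?_)
    · exact (Measurable.indicator measurable_const measurableSet_Ico).aestronglyMeasurable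
    · by_cases h : t ∈ Set.Ico y x <;> simp [Set.indicator_apply, h]
  rcases lt_or_ge (1/2 : ℝ) (y - x) with hc | hc
  · have hxy : x < y := by linarith
    have hcf : cfun (x, y) = 1 := by simp only [cfun]; rw [if_pos hc]
    rw [hcf]
    have hfun : ∀ t : ℝ, |(if x ≤ t then (1:ℝ) else 0) - (if y ≤ t then 1 else 0) - 1|
        = 1 - (Set.Ico x y).indicator (fun _ => (1:ℝ)) t := by
      intro t
      rcases le_or_gt x t with h1 | h1
      · rcases le_or_gt y t with h2 | h2
        · rw [if_pos h1, if_pos h2,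
            Set.indicator_of_notMem (fun hm => absurd hm.2 (not_lt.mpr h2))]
          norm_num
        · rw [if_pos h1, if_neg (not_le.mpr h2), Set.indicator_of_mem (Set.mem_Ico.mpr ⟨h1, h2⟩)]
          norm_num
      · rw [if_neg (not_le.mpr h1), if_neg (fun h2 => absurd (le_trans hxy.le h2)
          (not_le.mpr h1)), Set.indicator_of_notMem (fun hm => absurd hm.1 (not_le.mpr h1))]
        norm_num
    simp_rw [hfun]
    rw [MeasureTheory.integral_sub (integrable_const 1) hint]
    rw [aux_setint_sub _ measurableSet_Ico hx.1 hxy.le hy.2.le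
      Set.Ioo_subset_Ico_self Set.Ico_subset_Icc_self]
    rw [MeasureTheory.setIntegral_const]
    have hv : (volume (Set.Ioo (0:ℝ) 1)).toReal = 1 := by
      rw [Real.volume_Ioo]; norm_num
    rw [measureReal_def, hv, smul_eq_mul, mul_one]
    have habs : |x - y| = y - x := by rw [abs_of_nonpos (by linarith)]; ring
    simp only [rhoT]
    rw [habs, min_eq_right (by linarith)]
  · rcases lt_or_ge (1/2 : ℝ) (x - y) with hc2 | hc2
    · have hxy : y < x := by linarith
      have hcf : cfun (x, y) = -1 := by
        simp only [cfun]; rw [if_neg (not_lt.mpr (by linarith)), if_pos hc2]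
      rw [hcf]
      have hfun : ∀ t : ℝ, |(if x ≤ t then (1:ℝ) else 0) - (if y ≤ t then 1 else 0) - (-1)|
          = 1 - (Set.Ico y x).indicator (fun _ => (1:ℝ)) t := by
        intro t
        rcases le_or_gt y t with h1 | h1
        · rcases le_or_gt x t with h2 | h2
          · rw [if_pos h2, if_pos h1,
              Set.indicator_of_notMem (fun hm => absurd hm.2 (not_lt.mpr h2))]
            norm_num
          · rw [if_neg (not_le.mpr h2), if_pos h1, Set.indicator_of_mem (Set.mem_Ico.mpr ⟨h1, h2⟩)]
            norm_num
        · rw [if_neg (fun h2 => absurd (le_trans hxy.le h2) (not_le.mpr h1)),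
            if_neg (not_le.mpr h1),
            Set.indicator_of_notMem (fun hm => absurd hm.1 (not_le.mpr h1))]
          norm_num
      simp_rw [hfun]
      rw [MeasureTheory.integral_sub (integrable_const 1) hint']
      rw [aux_setint_sub _ measurableSet_Ico hy.1 hxy.le hx.2.le
        Set.Ioo_subset_Ico_self Set.Ico_subset_Icc_self]
      rw [MeasureTheory.setIntegral_const]
      have hv : (volume (Set.Ioo (0:ℝ) 1)).toReal = 1 := by
        rw [Real.volume_Ioo]; norm_num
      rw [measureReal_def, hv, smul_eq_mul, mul_one]
      have habs : |x - y| = x - y := abs_of_nonneg (by linarith)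
      simp only [rhoT]
      rw [habs, min_eq_right (by linarith)]
    · have hcf : cfun (x, y) = 0 := by
        simp only [cfun]; rw [if_neg (not_lt.mpr hc), if_neg (not_lt.mpr hc2)]
      rw [hcf]
      simp only [sub_zero]
      rw [aux_LC1 hx' hy']
      have habs : |x - y| ≤ 1/2 := abs_le.mpr ⟨by linarith, by linarith⟩
      simp only [rhoT]
      rw [min_eq_left (by linarith)]

instance aux_m_prob : IsProbabilityMeasure (volume.restrict (Set.Ioo (0:ℝ) 1)) := by
  constructor
  rw [Measure.restrict_apply_univ, Real.volume_Ioo]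
  norm_num

lemma aux_swap_bound (γ : Measure (ℝ × ℝ)) [IsProbabilityMeasure γ] (g : ℝ → ℝ × ℝ → ℝ)
    (hg : Measurable (Function.uncurry g)) (C : ℝ) (hb : ∀ t p, |g t p| ≤ C) :
    ∫ t in Set.Ioo (0:ℝ) 1, |∫ p, g t p ∂γ| ≤ ∫ p, (∫ t in Set.Ioo (0:ℝ) 1, |g t p|) ∂γ := by
  set m := volume.restrict (Set.Ioo (0:ℝ) 1) with hm'
  have hCnn : (0:ℝ) ≤ C := le_trans (abs_nonneg _) (hb 0 (0, 0))
  have habs : Measurable (Function.uncurry fun t p => |g t p|) := hg.abs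
  have hintprod : Integrable (Function.uncurry fun t p => |g t p|) (m.prod γ) := by
    refine aux_integrable_of_bound _ habs.aestronglyMeasurable C (.of_forall fun q => ?_)
    simp only [Function.uncurry, abs_abs]
    exact hb q.1 q.2
  have hint_t : ∀ t : ℝ, Integrable (fun p => |g t p|) γ := by
    intro t
    refine aux_integrable_of_bound _ ?_ C (.of_forall fun p => by
      rw [abs_abs]; exact hb t p)
    exact ((hg.comp (measurable_const.prodMk measurable_id)).abs).aestronglyMeasurable
  have hmeas1 : StronglyMeasurable fun t => ∫ p, g t p ∂γ :=
    hg.stronglyMeasurable.integral_prod_right'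
  have hmeas2 : StronglyMeasurable fun t => ∫ p, |g t p| ∂γ :=
    habs.stronglyMeasurable.integral_prod_right'
  have hb1 : ∀ t : ℝ, |∫ p, g t p ∂γ| ≤ ∫ p, |g t p| ∂γ := by
    intro t
    have := norm_integral_le_integral_norm (μ := γ) (f := fun p => g t p)
    simpa [Real.norm_eq_abs] using this
  have hb2 : ∀ t : ℝ, ∫ p, |g t p| ∂γ ≤ C := by
    intro t
    calc ∫ p, |g t p| ∂γ ≤ ∫ _, C ∂γ :=
          integral_mono (hint_t t) (integrable_const C) fun p => hb t p
    _ = C := by simp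
  have hm1' : AEStronglyMeasurable (fun t => |∫ p, g t p ∂γ|) m := by
    simpa [Real.norm_eq_abs] using hmeas1.aestronglyMeasurable.norm
  have hi1 : Integrable (fun t => |∫ p, g t p ∂γ|) m := by
    refine aux_integrable_of_bound _ hm1' C (.of_forall fun t => ?_)
    rw [abs_abs]; exact le_trans (hb1 t) (hb2 t)
  have hi2 : Integrable (fun t => ∫ p, |g t p| ∂γ) m := by
    refine aux_integrable_of_bound _ hmeas2.aestronglyMeasurable C (.of_forall fun t => ?_)
    rw [abs_of_nonneg (integral_nonneg fun p => abs_nonneg _)]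
    exact hb2 t
  have hstep : ∫ t, |∫ p, g t p ∂γ| ∂m ≤ ∫ t, (∫ p, |g t p| ∂γ) ∂m :=
    integral_mono hi1 hi2 hb1
  have hswap : ∫ t, (∫ p, |g t p| ∂γ) ∂m = ∫ p, (∫ t, |g t p| ∂m) ∂γ :=
    MeasureTheory.integral_integral_swap hintprod
  calc ∫ t, |∫ p, g t p ∂γ| ∂m ≤ ∫ t, (∫ p, |g t p| ∂γ) ∂m := hstep
  _ = ∫ p, (∫ t, |g t p| ∂m) ∂γ := hswap

lemma aux_exists_median (h : ℝ → ℝ) (hm : Measurable h) (hb : ∀ x, |h x| ≤ 1) :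
    ∃ α : ℝ, (∀ β : ℝ, (∫ t in Set.Ioo (0:ℝ) 1, |h t - α|) ≤ ∫ t in Set.Ioo (0:ℝ) 1, |h t - β|) ∧
      ∀ ε > (0:ℝ), ∃ t ∈ Set.Ioo (0:ℝ) 1, α - ε < h t ∧ h t ≤ α := by
  set m := volume.restrict (Set.Ioo (0:ℝ) 1) with hmdef
  have hmeasle : ∀ β : ℝ, MeasurableSet {t : ℝ | h t ≤ β} := fun β => hm measurableSet_Iic
  have hmeasge : ∀ β : ℝ, MeasurableSet {t : ℝ | β ≤ h t} :=
    fun β => measurableSet_le measurable_const hm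
  set A : ℝ → ℝ := fun β => (m {t | h t ≤ β}).toReal with hAdef
  have hAmono : Monotone A := fun a b hab =>
    ENNReal.toReal_mono (measure_ne_top m _) (measure_mono fun t ht => le_trans ht hab)
  set S := {β : ℝ | 1/2 ≤ A β} with hSdef
  have hS1 : (1:ℝ) ∈ S := by
    have huniv : {t : ℝ | h t ≤ (1:ℝ)} = Set.univ :=
      Set.eq_univ_of_forall fun t => (abs_le.mp (hb t)).2
    simp only [hSdef, Set.mem_setOf_eq, hAdef, huniv, measure_univ]
    norm_num
  have hSne : S.Nonempty := ⟨1, hS1⟩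
  have hSbdd : BddBelow S := by
    refine ⟨-2, fun β hβ => ?_⟩
    by_contra hcon
    push_neg at hcon
    have hempty : {t : ℝ | h t ≤ β} = ∅ := by
      ext t
      simp only [Set.mem_setOf_eq, Set.mem_empty_iff_false, iff_false, not_le]
      have := (abs_le.mp (hb t)).1
      linarith
    have hA0 : A β = 0 := by simp [hAdef, hempty]
    rw [hSdef, Set.mem_setOf_eq, hA0] at hβ
    linarith
  set α := sInf S with hαdef
  -- A is right-continuous at α and ≥ 1/2 there
  have hseq : Filter.Tendsto (fun n : ℕ => A (α + 1/(n+1))) Filter.atTop (𝓝 (A α)) := by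
    have hsets : Antitone fun n : ℕ => {t : ℝ | h t ≤ α + 1/(n+1)} := by
      intro a b hab t ht
      simp only [Set.mem_setOf_eq] at ht ⊢
      have h1 : (1:ℝ)/(b+1) ≤ 1/(a+1) := by
        apply one_div_le_one_div_of_le (by positivity)
        linarith [(Nat.cast_le (α := ℝ)).mpr hab]
      linarith
    have hint : ⋂ n : ℕ, {t : ℝ | h t ≤ α + 1/(n+1)} = {t : ℝ | h t ≤ α} := by
      ext t
      simp only [Set.mem_iInter, Set.mem_setOf_eq]
      constructor
      · intro hall
        by_contra hcon
        push_neg at hcon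
        obtain ⟨n, hn⟩ := exists_nat_one_div_lt (sub_pos.mpr hcon)
        have := hall n
        linarith
      · intro ht n
        have : (0:ℝ) < 1/(n+1) := by positivity
        linarith
    have := tendsto_measure_iInter_atTop (μ := m)
      (fun n => (hmeasle _).nullMeasurableSet) hsets ⟨0, measure_ne_top m _⟩
    rw [hint] at this
    exact (ENNReal.tendsto_toReal (measure_ne_top m _)).comp this
  have halfA : 1/2 ≤ A α := by
    refine ge_of_tendsto hseq (Filter.Eventually.of_forall fun n => ?_)
    have hlt : α < α + 1/(n+1) := by
      have : (0:ℝ) < 1/(n+1) := by positivity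
      linarith
    obtain ⟨β, hβS, hβlt⟩ := (csInf_lt_iff hSbdd hSne).mp hlt
    exact le_trans hβS (hAmono hβlt.le)
  -- the measure of {α ≤ h} is also ≥ 1/2
  have hAlt : ∀ β : ℝ, β < α → A β < 1/2 := by
    intro β hβ
    by_contra hcon
    push_neg at hcon
    exact absurd (csInf_le hSbdd hcon) (not_le.mpr hβ)
  have hcompl : ∀ β : ℝ, A β + (m {t : ℝ | β < h t}).toReal = 1 := by
    intro β
    have h1 := measure_add_measure_compl (μ := m) (hmeasle β)
    have hc : {t : ℝ | h t ≤ β}ᶜ = {t : ℝ | β < h t} := by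
      ext t; simp [not_le]
    rw [hc, measure_univ] at h1
    have := congrArg ENNReal.toReal h1
    rw [ENNReal.toReal_add (measure_ne_top m _) (measure_ne_top m _)] at this
    simpa using this
  set B : ℝ := (m {t : ℝ | α ≤ h t}).toReal with hBdef
  have halfB : 1/2 ≤ B := by
    have hsets : Antitone fun n : ℕ => {t : ℝ | α - 1/(n+1) < h t} := by
      intro a b hab t ht
      simp only [Set.mem_setOf_eq] at ht ⊢
      have h1 : (1:ℝ)/(b+1) ≤ 1/(a+1) := by
        apply one_div_le_one_div_of_le (by positivity)
        linarith [(Nat.cast_le (α := ℝ)).mpr hab]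
      linarith
    have hint : ⋂ n : ℕ, {t : ℝ | α - 1/(n+1) < h t} = {t : ℝ | α ≤ h t} := by
      ext t
      simp only [Set.mem_iInter, Set.mem_setOf_eq]
      constructor
      · intro hall
        by_contra hcon
        push_neg at hcon
        obtain ⟨n, hn⟩ := exists_nat_one_div_lt (sub_pos.mpr hcon)
        have := hall n
        linarith
      · intro ht n
        have : (0:ℝ) < 1/(n+1) := by positivity
        linarith
    have hT := tendsto_measure_iInter_atTop (μ := m)
      (fun n => (measurableSet_lt measurable_const hm).nullMeasurableSet) hsets
      ⟨0, measure_ne_top m _⟩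
    rw [hint] at hT
    have hT2 := (ENNReal.tendsto_toReal (measure_ne_top m _)).comp hT
    refine ge_of_tendsto hT2 (Filter.Eventually.of_forall fun n => ?_)
    have hlt : α - 1/(n+1) < α := by
      have : (0:ℝ) < 1/(n+1) := by positivity
      linarith
    have h2 := hAlt _ hlt
    have h3 := hcompl (α - 1/(n+1))
    simp only [Function.comp]
    linarith
  -- integrability of the absolute deviations
  have hIntAbs : ∀ β : ℝ, Integrable (fun t => |h t - β|) m := by
    intro β
    refine aux_integrable_of_bound m ((hm.sub measurable_const).abs).aestronglyMeasurable
      (1 + |β|) (.of_forall fun t => ?_)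
    rw [abs_abs]
    calc |h t - β| ≤ |h t| + |β| := abs_sub _ _
    _ ≤ 1 + |β| := by have := hb t; linarith
  refine ⟨α, ?_, ?_⟩
  · -- optimality
    intro β
    rcases le_total α β with hβ | hβ
    · set g : ℝ → ℝ := fun t => if h t ≤ α then (1:ℝ) else -1 with hgdef
      have hgmeas : Measurable g := Measurable.ite (hmeasle α) measurable_const measurable_const
      have hgint : Integrable g m := by
        refine aux_integrable_of_bound m hgmeas.aestronglyMeasurable 1 (.of_forall fun t => ?_)
        simp only [hgdef]
        split_ifs <;> norm_num
      have hgval : ∫ t, g t ∂m = 2 * A α - 1 := by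
        have hge : g = fun t => 2 * Set.indicator {t : ℝ | h t ≤ α} (fun _ => (1:ℝ)) t - 1 := by
          funext t
          by_cases ht : h t ≤ α <;> simp [hgdef, Set.indicator_apply, ht] <;> norm_num
        rw [hge]
        have hind : Integrable (fun t => Set.indicator {t : ℝ | h t ≤ α} (fun _ => (1:ℝ)) t) m := by
          refine aux_integrable_of_bound m ((measurable_const.indicator
            (hmeasle α)).aestronglyMeasurable) 1 (.of_forall fun t => ?_)
          by_cases ht : t ∈ {t : ℝ | h t ≤ α} <;> simp [Set.indicator_apply, ht]
        rw [integral_sub (hind.const_mul 2) (integrable_const 1), integral_const_mul,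
          MeasureTheory.integral_indicator_const (1:ℝ) (hmeasle α)]
        simp [hAdef, measureReal_def]
      have hpt : ∀ t, (β - α) * g t ≤ |h t - β| - |h t - α| := by
        intro t
        by_cases ht : h t ≤ α
        · simp only [hgdef, if_pos ht, mul_one]
          rw [abs_of_nonpos (by linarith), abs_of_nonpos (by linarith)]
          linarith
        · simp only [hgdef, if_neg ht, mul_neg_one]
          have htri : |h t - α| - |h t - β| ≤ |(h t - α) - (h t - β)| :=
            abs_sub_abs_le_abs_sub _ _
          have : |(h t - α) - (h t - β)| = β - α := by
            rw [show (h t - α) - (h t - β) = β - α by ring, abs_of_nonneg (by linarith)]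
          linarith
      have hint2 : Integrable (fun t => |h t - β| - |h t - α|) m := (hIntAbs β).sub (hIntAbs α)
      have hmono := integral_mono (hgint.const_mul (β - α)) hint2 hpt
      rw [integral_const_mul, hgval, integral_sub (hIntAbs β) (hIntAbs α)] at hmono
      nlinarith
    · set g : ℝ → ℝ := fun t => if α ≤ h t then (1:ℝ) else -1 with hgdef
      have hgmeas : Measurable g := Measurable.ite (hmeasge α) measurable_const measurable_const
      have hgint : Integrable g m := by
        refine aux_integrable_of_bound m hgmeas.aestronglyMeasurable 1 (.of_forall fun t => ?_)
        simp only [hgdef]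
        split_ifs <;> norm_num
      have hgval : ∫ t, g t ∂m = 2 * B - 1 := by
        have hge : g = fun t => 2 * Set.indicator {t : ℝ | α ≤ h t} (fun _ => (1:ℝ)) t - 1 := by
          funext t
          by_cases ht : α ≤ h t <;> simp [hgdef, Set.indicator_apply, ht] <;> norm_num
        rw [hge]
        have hind : Integrable (fun t => Set.indicator {t : ℝ | α ≤ h t} (fun _ => (1:ℝ)) t) m := by
          refine aux_integrable_of_bound m ((measurable_const.indicator
            (hmeasge α)).aestronglyMeasurable) 1 (.of_forall fun t => ?_)
          by_cases ht : t ∈ {t : ℝ | α ≤ h t} <;> simp [Set.indicator_apply, ht]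
        rw [integral_sub (hind.const_mul 2) (integrable_const 1), integral_const_mul,
          MeasureTheory.integral_indicator_const (1:ℝ) (hmeasge α)]
        simp [hBdef, measureReal_def]
      have hpt : ∀ t, (α - β) * g t ≤ |h t - β| - |h t - α| := by
        intro t
        by_cases ht : α ≤ h t
        · simp only [hgdef, if_pos ht, mul_one]
          rw [abs_of_nonneg (by linarith), abs_of_nonneg (by linarith)]
          linarith
        · simp only [hgdef, if_neg ht, mul_neg_one]
          have htri : |h t - α| - |h t - β| ≤ |(h t - α) - (h t - β)| :=
            abs_sub_abs_le_abs_sub _ _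
          have : |(h t - α) - (h t - β)| = α - β := by
            rw [show (h t - α) - (h t - β) = β - α by ring, abs_of_nonpos (by linarith)]
            ring
          linarith
      have hint2 : Integrable (fun t => |h t - β| - |h t - α|) m := (hIntAbs β).sub (hIntAbs α)
      have hmono := integral_mono (hgint.const_mul (α - β)) hint2 hpt
      rw [integral_const_mul, hgval, integral_sub (hIntAbs β) (hIntAbs α)] at hmono
      nlinarith
  · -- approximation from below
    intro ε hε
    have h1 : A (α - ε) < 1/2 := hAlt _ (by linarith)
    have hsub : m ({t : ℝ | h t ≤ α} \ {t : ℝ | h t ≤ α - ε}) ≠ 0 := by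
      intro h0
      have hle : m {t : ℝ | h t ≤ α} ≤ m {t : ℝ | h t ≤ α - ε} := by
        calc m {t : ℝ | h t ≤ α}
            ≤ m ({t : ℝ | h t ≤ α - ε} ∪ ({t : ℝ | h t ≤ α} \ {t : ℝ | h t ≤ α - ε})) :=
              measure_mono (fun t ht => by
                by_cases h2 : h t ≤ α - ε
                · exact Or.inl h2
                · exact Or.inr ⟨ht, h2⟩)
        _ ≤ m {t : ℝ | h t ≤ α - ε} + m ({t : ℝ | h t ≤ α} \ {t : ℝ | h t ≤ α - ε}) :=
              measure_union_le _ _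
        _ = m {t : ℝ | h t ≤ α - ε} := by rw [h0, add_zero]
      have h2 : A α ≤ A (α - ε) := ENNReal.toReal_mono (measure_ne_top m _) hle
      linarith
    rw [hmdef, Measure.restrict_apply ((hmeasle α).diff (hmeasle _))] at hsub
    obtain ⟨t, ht⟩ := nonempty_of_measure_ne_zero hsub
    obtain ⟨⟨ht1, ht2⟩, ht3⟩ := ht
    have h4 : α - ε < h t := lt_of_not_ge fun hcon => ht2 hcon
    exact ⟨t, ht3, h4, ht1⟩

lemma aux_tendsto_cdf_right (P : Measure ℝ) {y : ℕ → ℝ} {x : ℝ}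
    (hy : Tendsto y atTop (𝓝 x)) (hge : ∀ n, x ≤ y n) :
    Tendsto (fun n => cdf P (y n)) atTop (𝓝 (cdf P x)) := by
  have h1 : ContinuousWithinAt (cdf P) (Set.Ici x) x := (cdf P).right_continuous x
  exact h1.tendsto.comp (tendsto_nhdsWithin_iff.mpr ⟨hy, Filter.Eventually.of_forall hge⟩)

lemma aux_sSup_cdf (P : Measure ℝ) [IsProbabilityMeasure P] (x : ℝ) :
    sSup (cdf P '' Set.Iio x) = Fom P x := by
  have hbdd : BddAbove (cdf P '' Set.Iio x) := by
    refine ⟨1, ?_⟩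
    rintro v ⟨t, _, rfl⟩
    exact cdf_le_one P t
  refine le_antisymm (csSup_le ((Set.nonempty_Iio).image _) ?_) ?_
  · rintro v ⟨t, ht, rfl⟩
    rw [cdf_eq_toReal, Fom]
    exact ENNReal.toReal_mono (measure_ne_top P _)
      (measure_mono fun z hz => Set.mem_Iio.mpr (lt_of_le_of_lt (Set.mem_Iic.mp hz) ht))
  · set u : ℕ → ℝ := fun n => x - 1/(n+1) with hu
    have hux : ∀ n, u n < x := fun n => by
      have : (0:ℝ) < 1/(n+1) := by positivity
      simp only [hu]
      linarith
    have hmonoset : Monotone fun n : ℕ => Set.Iic (u n) := by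
      intro a b hab
      refine Set.Iic_subset_Iic.mpr ?_
      have h1 : (1:ℝ)/(b+1) ≤ 1/(a+1) := by
        apply one_div_le_one_div_of_le (by positivity)
        linarith [(Nat.cast_le (α := ℝ)).mpr hab]
      simp only [hu]
      linarith
    have hUnion : ⋃ n, Set.Iic (u n) = Set.Iio x := by
      ext z
      simp only [Set.mem_iUnion, Set.mem_Iic, Set.mem_Iio]
      constructor
      · rintro ⟨n, hn⟩
        exact lt_of_le_of_lt hn (hux n)
      · intro hz
        obtain ⟨n, hn⟩ := exists_nat_one_div_lt (by linarith : (0:ℝ) < x - z)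
        refine ⟨n, ?_⟩
        simp only [hu]
        linarith
    have hT : Tendsto (fun n => P (Set.Iic (u n))) atTop (𝓝 (P (Set.Iio x))) := by
      have := tendsto_measure_iUnion_atTop (μ := P) hmonoset
      rw [hUnion] at this
      exact this
    have hT2 : Tendsto (fun n => cdf P (u n)) atTop (𝓝 (Fom P x)) := by
      have := (ENNReal.tendsto_toReal (measure_ne_top P (Set.Iio x))).comp hT
      refine Tendsto.congr (fun n => ?_) this
      rw [Function.comp_apply, cdf_eq_toReal]
    refine le_of_tendsto hT2 (Filter.Eventually.of_forall fun n => ?_)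
    exact le_csSup hbdd ⟨u n, hux n, rfl⟩

lemma aux_tendsto_cdf_left (P : Measure ℝ) [IsProbabilityMeasure P] {y : ℕ → ℝ} {x : ℝ}
    (hy : Tendsto y atTop (𝓝 x)) (hlt : ∀ n, y n < x) :
    Tendsto (fun n => cdf P (y n)) atTop (𝓝 (Fom P x)) := by
  have h1 := Monotone.tendsto_nhdsLT (monotone_cdf P) x
  rw [aux_sSup_cdf P x] at h1
  exact h1.comp (tendsto_nhdsWithin_iff.mpr ⟨hy, Filter.Eventually.of_forall fun n => hlt n⟩)

end AuxCircle

section Main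
open Set Filter Topology ProbabilityTheory

variable {μ ν P Q : Measure ℝ}

lemma aux_meas_fD (s : ℝ) : Measurable (fun x : ℝ => if x ≤ s then x - s + 1 else x - s) :=
  Measurable.ite measurableSet_Iic (by fun_prop) (by fun_prop)

lemma aux_meas_fI (s : ℝ) : Measurable (fun x : ℝ => if x < s then x - s + 1 else x - s) :=
  Measurable.ite measurableSet_Iio (by fun_prop) (by fun_prop)

lemma aux_prob_cutD (μ : Measure ℝ) [IsProbabilityMeasure μ] (s : ℝ) :
    IsProbabilityMeasure (cutD μ s) :=
  Measure.isProbabilityMeasure_map (aux_meas_fD s).aemeasurable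

lemma aux_prob_cutI (μ : Measure ℝ) [IsProbabilityMeasure μ] (s : ℝ) :
    IsProbabilityMeasure (cutI μ s) :=
  Measure.isProbabilityMeasure_map (aux_meas_fI s).aemeasurable

lemma aux_cutD_supp [IsProbabilityMeasure μ] (hμ : μ (Set.Ico 0 1) = 1) {s : ℝ}
    (hs : s ∈ Set.Ico (0:ℝ) 1) : cutD μ s (Set.Icc 0 1) = 1 := by
  rw [cutD, Measure.map_apply (aux_meas_fD s) measurableSet_Icc]
  refine le_antisymm prob_le_one ?_
  calc (1 : ENNReal) = μ (Set.Ico 0 1) := hμ.symm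
  _ ≤ _ := by
      refine measure_mono fun x hx => ?_
      simp only [Set.mem_preimage, Set.mem_Icc]
      obtain ⟨hx0, hx1⟩ := hx
      obtain ⟨hs0, hs1⟩ := hs
      split_ifs with h
      · constructor <;> linarith
      · push_neg at h
        constructor <;> linarith

lemma aux_cutI_supp [IsProbabilityMeasure μ] (hμ : μ (Set.Ico 0 1) = 1) {s : ℝ}
    (hs : s ∈ Set.Ico (0:ℝ) 1) : cutI μ s (Set.Icc 0 1) = 1 := by
  rw [cutI, Measure.map_apply (aux_meas_fI s) measurableSet_Icc]
  refine le_antisymm prob_le_one ?_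
  calc (1 : ENNReal) = μ (Set.Ico 0 1) := hμ.symm
  _ ≤ _ := by
      refine measure_mono fun x hx => ?_
      simp only [Set.mem_preimage, Set.mem_Icc]
      obtain ⟨hx0, hx1⟩ := hx
      obtain ⟨hs0, hs1⟩ := hs
      split_ifs with h
      · constructor <;> linarith
      · push_neg at h
        constructor <;> linarith

lemma aux_Iic_split (μ : Measure ℝ) [IsProbabilityMeasure μ] {a b : ℝ} (hab : a ≤ b) :
    (μ (Set.Ioc a b)).toReal = cdf μ b - cdf μ a := by
  have hsplit : μ (Set.Iic b) = μ (Set.Iic a) + μ (Set.Ioc a b) := by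
    rw [← Set.Iic_union_Ioc_eq_Iic hab]
    refine measure_union ?_ measurableSet_Ioc
    exact Set.disjoint_left.mpr fun x hx1 hx2 => absurd hx2.1 (not_lt.mpr hx1)
  have := congrArg ENNReal.toReal hsplit
  rw [ENNReal.toReal_add (measure_ne_top _ _) (measure_ne_top _ _)] at this
  rw [cdf_eq_toReal, cdf_eq_toReal]
  linarith

lemma aux_Iic_split' (μ : Measure ℝ) [IsProbabilityMeasure μ] {a b : ℝ} (hab : a ≤ b) :
    (μ (Set.Icc a b)).toReal = cdf μ b - Fom μ a := by
  have hsplit : μ (Set.Iic b) = μ (Set.Iio a) + μ (Set.Icc a b) := by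
    have hu : Set.Iio a ∪ Set.Icc a b = Set.Iic b := by
      ext x
      simp only [Set.mem_union, Set.mem_Iio, Set.mem_Icc, Set.mem_Iic]
      constructor
      · rintro (h | ⟨h1, h2⟩)
        · linarith
        · exact h2
      · intro h
        rcases lt_or_ge x a with h1 | h1
        · exact Or.inl h1
        · exact Or.inr ⟨h1, h⟩
    rw [← hu]
    refine measure_union ?_ measurableSet_Icc
    exact Set.disjoint_left.mpr fun x hx1 hx2 => absurd hx2.1 (not_le.mpr hx1)
  have := congrArg ENNReal.toReal hsplit
  rw [ENNReal.toReal_add (measure_ne_top _ _) (measure_ne_top _ _)] at this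
  rw [cdf_eq_toReal, Fom]
  linarith

lemma aux_cdf_cutD [IsProbabilityMeasure μ] {s t : ℝ} (hs : s ∈ Set.Ico (0:ℝ) 1)
    (ht : t ∈ Set.Ioo (0:ℝ) 1) :
    cdf (cutD μ s) t = cdf μ (s + t - 1) + cdf μ (s + t) - cdf μ s := by
  haveI := aux_prob_cutD μ s
  obtain ⟨hs0, hs1⟩ := hs
  obtain ⟨ht0, ht1⟩ := ht
  rw [cdf_eq_toReal, cutD, Measure.map_apply (aux_meas_fD s) measurableSet_Iic]
  have hset : (fun x : ℝ => if x ≤ s then x - s + 1 else x - s) ⁻¹' Set.Iic t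
      = Set.Iic (s + t - 1) ∪ Set.Ioc s (s + t) := by
    ext x
    simp only [Set.mem_preimage, Set.mem_Iic, Set.mem_union, Set.mem_Ioc]
    split_ifs with hx
    · constructor
      · intro hh
        exact Or.inl (by linarith)
      · rintro (hh | ⟨hh1, hh2⟩)
        · linarith
        · linarith
    · push_neg at hx
      constructor
      · intro hh
        exact Or.inr ⟨hx, by linarith⟩
      · rintro (hh | ⟨hh1, hh2⟩)
        · linarith
        · linarith
  have hdisj : Disjoint (Set.Iic (s + t - 1)) (Set.Ioc s (s + t)) :=
    Set.disjoint_left.mpr fun x hx1 hx2 => by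
      simp only [Set.mem_Iic] at hx1
      have := hx2.1
      linarith
  rw [hset, measure_union hdisj measurableSet_Ioc,
    ENNReal.toReal_add (measure_ne_top _ _) (measure_ne_top _ _),
    aux_Iic_split μ (by linarith : s ≤ s + t), ← cdf_eq_toReal]
  ring

lemma aux_cdf_cutI [IsProbabilityMeasure μ] {s t : ℝ} (hs : s ∈ Set.Ico (0:ℝ) 1)
    (ht : t ∈ Set.Ioo (0:ℝ) 1) :
    cdf (cutI μ s) t = cdf μ (s + t - 1) + cdf μ (s + t) - Fom μ s := by
  haveI := aux_prob_cutI μ s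
  obtain ⟨hs0, hs1⟩ := hs
  obtain ⟨ht0, ht1⟩ := ht
  rw [cdf_eq_toReal, cutI, Measure.map_apply (aux_meas_fI s) measurableSet_Iic]
  have hset : (fun x : ℝ => if x < s then x - s + 1 else x - s) ⁻¹' Set.Iic t
      = Set.Iic (s + t - 1) ∪ Set.Icc s (s + t) := by
    ext x
    simp only [Set.mem_preimage, Set.mem_Iic, Set.mem_union, Set.mem_Icc]
    split_ifs with hx
    · constructor
      · intro hh
        exact Or.inl (by linarith)
      · rintro (hh | ⟨hh1, hh2⟩)
        · linarith
        · linarith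
    · push_neg at hx
      constructor
      · intro hh
        exact Or.inr ⟨hx, by linarith⟩
      · rintro (hh | ⟨hh1, hh2⟩)
        · linarith
        · linarith
  have hdisj : Disjoint (Set.Iic (s + t - 1)) (Set.Icc s (s + t)) :=
    Set.disjoint_left.mpr fun x hx1 hx2 => by
      simp only [Set.mem_Iic] at hx1
      have := hx2.1
      linarith
  rw [hset, measure_union hdisj measurableSet_Icc,
    ENNReal.toReal_add (measure_ne_top _ _) (measure_ne_top _ _),
    aux_Iic_split' μ (by linarith : s ≤ s + t), ← cdf_eq_toReal]
  ring

lemma aux_intervalIntegrable {f : ℝ → ℝ} (hf : Measurable f) (C : ℝ) (hb : ∀ x, |f x| ≤ C)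
    (a b : ℝ) : IntervalIntegrable f volume a b := by
  rw [intervalIntegrable_iff]
  haveI : IsFiniteMeasure (volume.restrict (Set.uIoc a b)) := by
    constructor
    rw [Measure.restrict_apply_univ]
    have : Set.uIoc a b = Set.Ioc (a ⊓ b) (a ⊔ b) := rfl
    rw [this]
    exact measure_Ioc_lt_top
  exact aux_integrable_of_bound _ hf.aestronglyMeasurable C (.of_forall hb)

lemma aux_ioo_interval (f : ℝ → ℝ) {a b : ℝ} (hab : a ≤ b) :
    ∫ t in Set.Ioo a b, f t = ∫ t in a..b, f t := by
  rw [intervalIntegral.integral_of_le hab]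
  exact setIntegral_congr_set Ioo_ae_eq_Ioc

lemma aux_cdf_bound (μ ν : Measure ℝ) (t : ℝ) : |cdf μ t - cdf ν t| ≤ 1 := by
  have h1 := cdf_nonneg μ t
  have h2 := cdf_le_one μ t
  have h3 := cdf_nonneg ν t
  have h4 := cdf_le_one ν t
  exact abs_le.mpr ⟨by linarith, by linarith⟩

lemma aux_cut_change [IsProbabilityMeasure μ] [IsProbabilityMeasure ν]
    (hμ : μ (Set.Ico 0 1) = 1) (hν : ν (Set.Ico 0 1) = 1) {s : ℝ} (hs : s ∈ Set.Ico (0:ℝ) 1)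
    (c : ℝ) :
    ∫ t in Set.Ioo (0:ℝ) 1,
        |(cdf μ (s + t - 1) - cdf ν (s + t - 1)) + (cdf μ (s + t) - cdf ν (s + t)) - c|
      = ∫ t in Set.Ioo (0:ℝ) 1, |(cdf μ t - cdf ν t) - c| := by
  have hμIcc : μ (Set.Icc 0 1) = 1 :=
    le_antisymm prob_le_one (hμ ▸ measure_mono Set.Ico_subset_Icc_self)
  have hνIcc : ν (Set.Icc 0 1) = 1 :=
    le_antisymm prob_le_one (hν ▸ measure_mono Set.Ico_subset_Icc_self)
  obtain ⟨hs0, hs1⟩ := hs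
  set H : ℝ → ℝ := fun t => cdf μ t - cdf ν t with hHdef
  have hHmeas : Measurable H := (aux_meas_cdf μ).sub (aux_meas_cdf ν)
  set J : ℝ → ℝ := fun t => |H (s + t - 1) + H (s + t) - c| with hJdef
  set W : ℝ → ℝ := fun r => |H r - c| with hWdef
  have hJmeas : Measurable J := by
    refine Measurable.abs ?_
    exact ((hHmeas.comp (by fun_prop)).add (hHmeas.comp (by fun_prop))).sub measurable_const
  have hWmeas : Measurable W := (hHmeas.sub measurable_const).abs
  have hJb : ∀ t, |J t| ≤ 2 + |c| := by
    intro t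
    rw [hJdef, abs_abs]
    have h1 := aux_cdf_bound μ ν (s + t - 1)
    have h2 := aux_cdf_bound μ ν (s + t)
    calc |H (s + t - 1) + H (s + t) - c| ≤ |H (s + t - 1) + H (s + t)| + |c| := abs_sub _ _
    _ ≤ |H (s + t - 1)| + |H (s + t)| + |c| := by
        have := abs_add_le (H (s + t - 1)) (H (s + t))
        linarith
    _ ≤ 2 + |c| := by
        simp only [hHdef] at h1 h2 ⊢
        linarith
  have hWb : ∀ r, |W r| ≤ 1 + |c| := by
    intro r
    rw [hWdef, abs_abs]
    have h1 := aux_cdf_bound μ ν r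
    calc |H r - c| ≤ |H r| + |c| := abs_sub _ _
    _ ≤ 1 + |c| := by
        simp only [hHdef] at h1 ⊢
        linarith
  have hJint : ∀ a b : ℝ, IntervalIntegrable J volume a b :=
    aux_intervalIntegrable hJmeas (2 + |c|) hJb
  have hWint : ∀ a b : ℝ, IntervalIntegrable W volume a b :=
    aux_intervalIntegrable hWmeas (1 + |c|) hWb
  have hsplit : ∫ t in (0:ℝ)..1, J t = (∫ t in (0:ℝ)..(1 - s), J t) + ∫ t in (1 - s)..1, J t :=
    (intervalIntegral.integral_add_adjacent_intervals (hJint 0 (1 - s)) (hJint (1 - s) 1)).symm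
  have hp1 : ∫ t in (0:ℝ)..(1 - s), J t = ∫ r in s..(1:ℝ), W r := by
    have e1 : ∫ t in Set.Ioo (0:ℝ) (1 - s), J t = ∫ t in Set.Ioo (0:ℝ) (1 - s), W (t + s) := by
      refine setIntegral_congr_fun measurableSet_Ioo fun t ht => ?_
      obtain ⟨ht0, ht1⟩ := ht
      have hz : H (s + t - 1) = 0 := by
        simp only [hHdef]
        rw [aux_cdf_neg μ hμIcc (by linarith), aux_cdf_neg ν hνIcc (by linarith)]
        ring
      simp only [hJdef, hWdef]
      rw [hz, zero_add, add_comm s t]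
    have e4 : ∫ t in (0:ℝ)..(1 - s), W (t + s) = ∫ r in (0 + s)..(1 - s + s), W r :=
      intervalIntegral.integral_comp_add_right W s
    rw [← aux_ioo_interval J (by linarith), e1, aux_ioo_interval _ (by linarith), e4]
    norm_num
  have hp2 : ∫ t in (1 - s)..1, J t = ∫ r in (0:ℝ)..s, W r := by
    have e1 : ∫ t in Set.Ioo (1 - s) 1, J t
        = ∫ t in Set.Ioo (1 - s) 1, W (t + (s - 1)) := by
      refine setIntegral_congr_fun measurableSet_Ioo fun t ht => ?_
      obtain ⟨ht0, ht1⟩ := ht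
      have hz : H (s + t) = 0 := by
        simp only [hHdef]
        rw [aux_cdf_one μ hμIcc (by linarith), aux_cdf_one ν hνIcc (by linarith)]
        ring
      have harg : s + t - 1 = t + (s - 1) := by ring
      simp only [hJdef, hWdef]
      rw [hz, add_zero, harg]
    have e4 : ∫ t in (1 - s)..1, W (t + (s - 1)) = ∫ r in (1 - s + (s - 1))..(1 + (s - 1)), W r :=
      intervalIntegral.integral_comp_add_right W (s - 1)
    rw [← aux_ioo_interval J (by linarith), e1, aux_ioo_interval _ (by linarith), e4]
    norm_num
  have hre : (∫ r in s..(1:ℝ), W r) + ∫ r in (0:ℝ)..s, W r = ∫ r in (0:ℝ)..1, W r := by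
    rw [add_comm]
    exact intervalIntegral.integral_add_adjacent_intervals (hWint 0 s) (hWint s 1)
  calc ∫ t in Set.Ioo (0:ℝ) 1,
        |(cdf μ (s + t - 1) - cdf ν (s + t - 1)) + (cdf μ (s + t) - cdf ν (s + t)) - c|
      = ∫ t in (0:ℝ)..1, J t := aux_ioo_interval J zero_le_one
  _ = (∫ t in (0:ℝ)..(1 - s), J t) + ∫ t in (1 - s)..1, J t := hsplit
  _ = (∫ r in s..(1:ℝ), W r) + ∫ r in (0:ℝ)..s, W r := by rw [hp1, hp2]
  _ = ∫ r in (0:ℝ)..1, W r := hre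
  _ = ∫ t in Set.Ioo (0:ℝ) 1, |(cdf μ t - cdf ν t) - c| := (aux_ioo_interval W zero_le_one).symm

lemma aux_cut_integral_D [IsProbabilityMeasure μ] [IsProbabilityMeasure ν]
    (hμ : μ (Set.Ico 0 1) = 1) (hν : ν (Set.Ico 0 1) = 1) {s : ℝ} (hs : s ∈ Set.Ico (0:ℝ) 1) :
    ∫ t in Set.Ioo (0:ℝ) 1, |cdf (cutD μ s) t - cdf (cutD ν s) t|
      = ∫ t in Set.Ioo (0:ℝ) 1, |(cdf μ t - cdf ν t) - (cdf μ s - cdf ν s)| := by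
  have h1 : ∫ t in Set.Ioo (0:ℝ) 1, |cdf (cutD μ s) t - cdf (cutD ν s) t|
      = ∫ t in Set.Ioo (0:ℝ) 1,
          |(cdf μ (s + t - 1) - cdf ν (s + t - 1)) + (cdf μ (s + t) - cdf ν (s + t))
            - (cdf μ s - cdf ν s)| := by
    refine setIntegral_congr_fun measurableSet_Ioo fun t ht => ?_
    rw [aux_cdf_cutD (μ := μ) hs ht, aux_cdf_cutD (μ := ν) hs ht]
    ring_nf
  rw [h1, aux_cut_change hμ hν hs]

lemma aux_cut_integral_I [IsProbabilityMeasure μ] [IsProbabilityMeasure ν]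
    (hμ : μ (Set.Ico 0 1) = 1) (hν : ν (Set.Ico 0 1) = 1) {s : ℝ} (hs : s ∈ Set.Ico (0:ℝ) 1) :
    ∫ t in Set.Ioo (0:ℝ) 1, |cdf (cutI μ s) t - cdf (cutI ν s) t|
      = ∫ t in Set.Ioo (0:ℝ) 1, |(cdf μ t - cdf ν t) - (Fom μ s - Fom ν s)| := by
  have h1 : ∫ t in Set.Ioo (0:ℝ) 1, |cdf (cutI μ s) t - cdf (cutI ν s) t|
      = ∫ t in Set.Ioo (0:ℝ) 1,
          |(cdf μ (s + t - 1) - cdf ν (s + t - 1)) + (cdf μ (s + t) - cdf ν (s + t))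
            - (Fom μ s - Fom ν s)| := by
    refine setIntegral_congr_fun measurableSet_Ioo fun t ht => ?_
    rw [aux_cdf_cutI (μ := μ) hs ht, aux_cdf_cutI (μ := ν) hs ht]
    ring_nf
  rw [h1, aux_cut_change hμ hν hs]

/-- the quantile function -/
noncomputable def QF (P : Measure ℝ) (u : ℝ) : ℝ := sInf {t | u ≤ cdf P t}

/-- truncated quantile function -/
noncomputable def QFb (P : Measure ℝ) (u : ℝ) : ℝ :=
  if u ∈ Set.Ioo (0:ℝ) 1 then QF P u else 0

lemma aux_QF_one_mem [IsProbabilityMeasure P] (hP : P (Set.Icc 0 1) = 1) {u : ℝ}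
    (hu1 : u ≤ 1) : (1:ℝ) ∈ {t : ℝ | u ≤ cdf P t} := by
  simp only [Set.mem_setOf_eq, aux_cdf_one P hP le_rfl]
  exact hu1

lemma aux_QF_lb [IsProbabilityMeasure P] (hP : P (Set.Icc 0 1) = 1) {u : ℝ}
    (hu : 0 < u) : ∀ t ∈ {t : ℝ | u ≤ cdf P t}, (0:ℝ) ≤ t := by
  intro t ht
  by_contra hcon
  push_neg at hcon
  rw [Set.mem_setOf_eq, aux_cdf_neg P hP hcon] at ht
  linarith

lemma aux_QF_mem [IsProbabilityMeasure P] (hP : P (Set.Icc 0 1) = 1) {u : ℝ}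
    (hu : u ∈ Set.Ioo (0:ℝ) 1) : QF P u ∈ Set.Icc (0:ℝ) 1 := by
  constructor
  · exact le_csInf ⟨1, aux_QF_one_mem hP hu.2.le⟩ (aux_QF_lb hP hu.1)
  · exact csInf_le ⟨0, aux_QF_lb hP hu.1⟩ (aux_QF_one_mem hP hu.2.le)

lemma aux_galois [IsProbabilityMeasure P] (hP : P (Set.Icc 0 1) = 1) {u : ℝ}
    (hu : u ∈ Set.Ioo (0:ℝ) 1) (r : ℝ) : QF P u ≤ r ↔ u ≤ cdf P r := by
  have hne : {t : ℝ | u ≤ cdf P t}.Nonempty := ⟨1, aux_QF_one_mem hP hu.2.le⟩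
  have hbdd : BddBelow {t : ℝ | u ≤ cdf P t} := ⟨0, aux_QF_lb hP hu.1⟩
  constructor
  · intro hQr
    have hQ : u ≤ cdf P (QF P u) := by
      have hseq : Tendsto (fun n : ℕ => QF P u + 1/(n+1)) atTop (𝓝 (QF P u)) := by
        have h0 := tendsto_one_div_add_atTop_nhds_zero_nat (𝕜 := ℝ)
        simpa using tendsto_const_nhds.add h0
      have h2 : ∀ n : ℕ, u ≤ cdf P (QF P u + 1/(n+1)) := by
        intro n
        have hlt : sInf {t : ℝ | u ≤ cdf P t} < QF P u + 1/(n+1) := by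
          have hpos : (0:ℝ) < 1/(n+1) := by positivity
          have : QF P u = sInf {t : ℝ | u ≤ cdf P t} := rfl
          linarith
        obtain ⟨t, htS, htlt⟩ := (csInf_lt_iff hbdd hne).mp hlt
        exact le_trans htS (monotone_cdf P htlt.le)
      exact ge_of_tendsto (aux_tendsto_cdf_right P hseq fun n => by
        have hpos : (0:ℝ) < 1/(n+1) := by positivity
        linarith) (Filter.Eventually.of_forall h2)
    exact le_trans hQ (monotone_cdf P hQr)
  · intro hcdf
    exact csInf_le hbdd hcdf

lemma aux_QFb_meas [IsProbabilityMeasure P] (hP : P (Set.Icc 0 1) = 1) :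
    Measurable (QFb P) := by
  apply measurable_of_Iic
  intro r
  have hset : QFb P ⁻¹' Set.Iic r
      = (Set.Ioo 0 1 ∩ Set.Iic (cdf P r)) ∪ ((Set.Ioo (0:ℝ) 1)ᶜ ∩ {u : ℝ | (0:ℝ) ≤ r}) := by
    ext u
    by_cases hu : u ∈ Set.Ioo (0:ℝ) 1
    · simp only [Set.mem_preimage, QFb, if_pos hu, Set.mem_Iic, Set.mem_union,
        Set.mem_inter_iff, Set.mem_compl_iff, hu, not_true_eq_false, false_and, or_false,
        true_and]
      exact aux_galois hP hu r
    · simp only [Set.mem_preimage, QFb, if_neg hu, Set.mem_Iic, Set.mem_union,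
        Set.mem_inter_iff, Set.mem_compl_iff, hu, false_and, false_or, not_false_eq_true,
        true_and, Set.mem_setOf_eq]
      simp
  rw [hset]
  refine (measurableSet_Ioo.inter measurableSet_Iic).union
    (measurableSet_Ioo.compl.inter ?_)
  by_cases hr : (0:ℝ) ≤ r
  · have : {u : ℝ | (0:ℝ) ≤ r} = Set.univ := Set.eq_univ_of_forall fun _ => hr
    rw [this]
    exact MeasurableSet.univ
  · have : {u : ℝ | (0:ℝ) ≤ r} = ∅ := Set.eq_empty_of_forall_notMem fun _ h => hr h
    rw [this]
    exact MeasurableSet.empty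

lemma aux_map_QFb [IsProbabilityMeasure P] (hP : P (Set.Icc 0 1) = 1) :
    (volume.restrict (Set.Ioo (0:ℝ) 1)).map (QFb P) = P := by
  refine Measure.ext_of_Iic _ _ fun r => ?_
  rw [Measure.map_apply (aux_QFb_meas hP) measurableSet_Iic,
    Measure.restrict_apply (aux_QFb_meas hP measurableSet_Iic)]
  have hseteq : QFb P ⁻¹' Set.Iic r ∩ Set.Ioo 0 1 = Set.Ioc 0 (cdf P r) ∩ Set.Ioo 0 1 := by
    ext u
    simp only [Set.mem_inter_iff, Set.mem_preimage, Set.mem_Iic, Set.mem_Ioc, Set.mem_Ioo]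
    constructor
    · rintro ⟨h1, h2⟩
      have hu : u ∈ Set.Ioo (0:ℝ) 1 := h2
      rw [QFb, if_pos hu] at h1
      exact ⟨⟨h2.1, (aux_galois hP hu r).mp h1⟩, h2⟩
    · rintro ⟨⟨h1, h2⟩, h3⟩
      have hu : u ∈ Set.Ioo (0:ℝ) 1 := h3
      refine ⟨?_, h3⟩
      rw [QFb, if_pos hu]
      exact (aux_galois hP hu r).mpr h2
  rw [hseteq]
  rcases lt_or_ge (cdf P r) 1 with hc | hc
  · have heq2 : Set.Ioc 0 (cdf P r) ∩ Set.Ioo 0 1 = Set.Ioc 0 (cdf P r) := by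
      ext u
      simp only [Set.mem_inter_iff, Set.mem_Ioc, Set.mem_Ioo]
      constructor
      · rintro ⟨h1, _⟩
        exact h1
      · intro h1
        exact ⟨h1, h1.1, lt_of_le_of_lt h1.2 hc⟩
    rw [heq2, Real.volume_Ioc, sub_zero, ofReal_cdf]
  · have hc1 : cdf P r = 1 := le_antisymm (cdf_le_one P r) hc
    have heq2 : Set.Ioc 0 (cdf P r) ∩ Set.Ioo 0 1 = Set.Ioo 0 1 := by
      rw [hc1]
      ext u
      simp only [Set.mem_inter_iff, Set.mem_Ioc, Set.mem_Ioo]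
      constructor
      · rintro ⟨_, h2⟩
        exact h2
      · intro h2
        exact ⟨⟨h2.1, h2.2.le⟩, h2⟩
    rw [heq2, Real.volume_Ioo, ← ofReal_cdf, hc1]
    norm_num

/-- the inverse of the cut map -/
noncomputable def gmap (s y : ℝ) : ℝ := if 1 - s ≤ y then y + s - 1 else y + s

lemma aux_meas_gmap (s : ℝ) : Measurable (gmap s) :=
  Measurable.ite measurableSet_Ici (by fun_prop) (by fun_prop)

lemma aux_meas_rhoT : Measurable (fun q : ℝ × ℝ => rhoT q.1 q.2) := by
  simp only [rhoT]
  exact ((measurable_fst.sub measurable_snd).abs).min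
    (measurable_const.sub (measurable_fst.sub measurable_snd).abs)

lemma aux_gmap_mem {s : ℝ} (hs : s ∈ Set.Ico (0:ℝ) 1) {x : ℝ} (hx : x ∈ Set.Icc (0:ℝ) 1) :
    gmap s x ∈ Set.Icc (0:ℝ) 1 := by
  obtain ⟨hs0, hs1⟩ := hs
  obtain ⟨hx0, hx1⟩ := hx
  simp only [gmap, Set.mem_Icc]
  split_ifs with h1
  · constructor <;> linarith
  · push_neg at h1
    constructor <;> linarith

lemma aux_rhoT_bound {a b : ℝ} (ha : a ∈ Set.Icc (0:ℝ) 1) (hb : b ∈ Set.Icc (0:ℝ) 1) :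
    |rhoT a b| ≤ 1 := by
  obtain ⟨ha0, ha1⟩ := ha
  obtain ⟨hb0, hb1⟩ := hb
  have hd : |a - b| ≤ 1 := abs_le.mpr ⟨by linarith, by linarith⟩
  have hnn : (0:ℝ) ≤ rhoT a b := by
    simp only [rhoT]
    exact le_min (abs_nonneg _) (by linarith)
  rw [abs_of_nonneg hnn]
  simp only [rhoT]
  exact le_trans (min_le_left _ _) hd

lemma aux_rhoT_gmap_le {s x y : ℝ} (hs : s ∈ Set.Ico (0:ℝ) 1) (hx : x ∈ Set.Icc (0:ℝ) 1)
    (hy : y ∈ Set.Icc (0:ℝ) 1) : rhoT (gmap s x) (gmap s y) ≤ |x - y| := by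
  obtain ⟨hs0, hs1⟩ := hs
  obtain ⟨hx0, hx1⟩ := hx
  obtain ⟨hy0, hy1⟩ := hy
  simp only [rhoT, gmap]
  split_ifs with h1 h2 h2
  · rw [show x + s - 1 - (y + s - 1) = x - y from by ring]
    exact min_le_left _ _
  · push_neg at h2
    rw [show x + s - 1 - (y + s) = x - y - 1 from by ring]
    have hxy : y < x := by linarith
    have h3 : |x - y - 1| = 1 - (x - y) := by
      rw [abs_of_nonpos (by linarith)]
      ring
    have h4 : |x - y| = x - y := abs_of_nonneg (by linarith)
    rw [h3, h4]
    refine le_trans (min_le_right _ _) ?_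
    linarith
  · push_neg at h1
    rw [show x + s - (y + s - 1) = x - y + 1 from by ring]
    have hxy : x < y := by linarith
    have h3 : |x - y + 1| = 1 + (x - y) := by
      rw [abs_of_nonneg (by linarith)]
      ring
    have h4 : |x - y| = y - x := by
      rw [abs_of_nonpos (by linarith)]
      ring
    rw [h3, h4]
    refine le_trans (min_le_right _ _) ?_
    linarith
  · rw [show x + s - (y + s) = x - y from by ring]
    exact min_le_left _ _

lemma aux_gmap_fD {s : ℝ} (hs : s ∈ Set.Ico (0:ℝ) 1) :
    ∀ x ∈ Set.Ico (0:ℝ) 1, gmap s ((fun x : ℝ => if x ≤ s then x - s + 1 else x - s) x) = x := by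
  intro x hx
  obtain ⟨hx0, hx1⟩ := hx
  obtain ⟨hs0, hs1⟩ := hs
  simp only [gmap]
  split_ifs <;> linarith

lemma aux_gmap_fI {s : ℝ} (hs : s ∈ Set.Ico (0:ℝ) 1) :
    ∀ x ∈ Set.Ico (0:ℝ) 1, gmap s ((fun x : ℝ => if x < s then x - s + 1 else x - s) x) = x := by
  intro x hx
  obtain ⟨hx0, hx1⟩ := hx
  obtain ⟨hs0, hs1⟩ := hs
  simp only [gmap]
  split_ifs <;> linarith

lemma aux_fD_mem {s : ℝ} (hs : s ∈ Set.Ico (0:ℝ) 1) :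
    ∀ x ∈ Set.Ico (0:ℝ) 1, (fun x : ℝ => if x ≤ s then x - s + 1 else x - s) x ∈ Set.Icc (0:ℝ) 1 := by
  intro x hx
  obtain ⟨hx0, hx1⟩ := hx
  obtain ⟨hs0, hs1⟩ := hs
  simp only [Set.mem_Icc]
  split_ifs with h1
  · constructor <;> linarith
  · push_neg at h1
    constructor <;> linarith

lemma aux_fI_mem {s : ℝ} (hs : s ∈ Set.Ico (0:ℝ) 1) :
    ∀ x ∈ Set.Ico (0:ℝ) 1, (fun x : ℝ => if x < s then x - s + 1 else x - s) x ∈ Set.Icc (0:ℝ) 1 := by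
  intro x hx
  obtain ⟨hx0, hx1⟩ := hx
  obtain ⟨hs0, hs1⟩ := hs
  simp only [Set.mem_Icc]
  split_ifs with h1
  · constructor <;> linarith
  · push_neg at h1
    constructor <;> linarith

lemma aux_S_nonempty (ρ : ℝ → ℝ → ℝ) (P Q : Measure ℝ) [IsProbabilityMeasure P]
    [IsProbabilityMeasure Q] :
    {c : ℝ | ∃ γ : Measure (ℝ × ℝ),
      γ.map Prod.fst = P ∧ γ.map Prod.snd = Q ∧ c = ∫ p, ρ p.1 p.2 ∂γ}.Nonempty := by
  refine ⟨∫ p, ρ p.1 p.2 ∂(P.prod Q), P.prod Q, ?_, ?_, rfl⟩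
  · rw [Measure.map_fst_prod]; simp
  · rw [Measure.map_snd_prod]; simp

lemma aux_bdd_abs (P Q : Measure ℝ) :
    BddBelow {c : ℝ | ∃ γ : Measure (ℝ × ℝ),
      γ.map Prod.fst = P ∧ γ.map Prod.snd = Q ∧ c = ∫ p, |p.1 - p.2| ∂γ} := by
  refine ⟨0, fun c hc => ?_⟩
  obtain ⟨γ, _, _, rfl⟩ := hc
  exact integral_nonneg fun p => abs_nonneg _

lemma aux_marg_null {γ : Measure (ℝ × ℝ)} {P : Measure ℝ} {A : Set ℝ} (hA : MeasurableSet A)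
    (h1 : γ.map Prod.fst = P) (hPA : P A = 0) : γ {p | p.1 ∈ A} = 0 := by
  have := Measure.map_apply (μ := γ) measurable_fst hA
  rw [h1, hPA] at this
  exact this.symm

lemma aux_marg_null_snd {γ : Measure (ℝ × ℝ)} {Q : Measure ℝ} {A : Set ℝ} (hA : MeasurableSet A)
    (h2 : γ.map Prod.snd = Q) (hQA : Q A = 0) : γ {p | p.2 ∈ A} = 0 := by
  have := Measure.map_apply (μ := γ) measurable_snd hA
  rw [h2, hQA] at this
  exact this.symm

lemma aux_ae_mem {γ : Measure (ℝ × ℝ)} {P Q : Measure ℝ} [IsProbabilityMeasure P]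
    [IsProbabilityMeasure Q] {A : Set ℝ} (hA : MeasurableSet A)
    (h1 : γ.map Prod.fst = P) (h2 : γ.map Prod.snd = Q) (hPA : P A = 1) (hQA : Q A = 1) :
    ∀ᵐ p ∂γ, p.1 ∈ A ∧ p.2 ∈ A := by
  have g1 : γ {p : ℝ × ℝ | p.1 ∈ Aᶜ} = 0 :=
    aux_marg_null hA.compl h1 (aux_compl_null P hA hPA)
  have g2 : γ {p : ℝ × ℝ | p.2 ∈ Aᶜ} = 0 :=
    aux_marg_null_snd hA.compl h2 (aux_compl_null Q hA hQA)
  rw [MeasureTheory.ae_iff]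
  refine measure_mono_null (fun p hp => ?_) (measure_union_null g1 g2)
  simp only [Set.mem_setOf_eq, not_and_or] at hp
  rcases hp with hp | hp
  · exact Or.inl hp
  · exact Or.inr hp

lemma aux_bdd_rho [IsProbabilityMeasure μ] [IsProbabilityMeasure ν]
    (hμ : μ (Set.Ico 0 1) = 1) (hν : ν (Set.Ico 0 1) = 1) :
    BddBelow {c : ℝ | ∃ γ : Measure (ℝ × ℝ),
      γ.map Prod.fst = μ ∧ γ.map Prod.snd = ν ∧ c = ∫ p, rhoT p.1 p.2 ∂γ} := by
  refine ⟨0, fun c hc => ?_⟩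
  obtain ⟨γ, h1, h2, rfl⟩ := hc
  refine integral_nonneg_of_ae ?_
  filter_upwards [aux_ae_mem measurableSet_Ico h1 h2 hμ hν] with p hp
  obtain ⟨⟨ha1, ha2⟩, hb1, hb2⟩ := hp
  have h3 : |p.1 - p.2| ≤ 1 := abs_le.mpr ⟨by linarith, by linarith⟩
  have : (0:ℝ) ≤ rhoT p.1 p.2 := by
    simp only [rhoT]
    exact le_min (abs_nonneg _) (by linarith)
  simpa using this

lemma aux_kant_le [IsProbabilityMeasure P] [IsProbabilityMeasure Q]
    (hP : P (Set.Icc 0 1) = 1) (hQ : Q (Set.Icc 0 1) = 1) :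
    kantorovich (fun x y => |x - y|) P Q ≤ ∫ t in Set.Ioo (0:ℝ) 1, |cdf P t - cdf Q t| := by
  set m := volume.restrict (Set.Ioo (0:ℝ) 1) with hmdef
  have hQPm := aux_QFb_meas hP
  have hQQm := aux_QFb_meas hQ
  have hpair : Measurable fun u => (QFb P u, QFb Q u) := hQPm.prodMk hQQm
  set γ : Measure (ℝ × ℝ) := m.map (fun u => (QFb P u, QFb Q u)) with hγdef
  have hfst : γ.map Prod.fst = P := by
    rw [hγdef, Measure.map_map measurable_fst hpair]
    have hcomp : (Prod.fst ∘ fun u => (QFb P u, QFb Q u)) = QFb P := rfl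
    rw [hcomp]
    exact aux_map_QFb hP
  have hsnd : γ.map Prod.snd = Q := by
    rw [hγdef, Measure.map_map measurable_snd hpair]
    have hcomp : (Prod.snd ∘ fun u => (QFb P u, QFb Q u)) = QFb Q := rfl
    rw [hcomp]
    exact aux_map_QFb hQ
  have hcost : ∫ p, |p.1 - p.2| ∂γ = ∫ u, |QFb P u - QFb Q u| ∂m := by
    rw [hγdef, integral_map (f := fun p : ℝ × ℝ => |p.1 - p.2|) hpair.aemeasurable
      ((measurable_fst.sub measurable_snd).abs).aestronglyMeasurable]
  have hstep1 : ∫ u, |QFb P u - QFb Q u| ∂m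
      = ∫ u in Set.Ioo (0:ℝ) 1, (∫ t in Set.Ioo (0:ℝ) 1,
          |(if u ≤ cdf P t then (1:ℝ) else 0) - (if u ≤ cdf Q t then 1 else 0)|) := by
    rw [hmdef]
    refine setIntegral_congr_fun measurableSet_Ioo fun u hu => ?_
    have hQPu : QFb P u = QF P u := if_pos hu
    have hQQu : QFb Q u = QF Q u := if_pos hu
    rw [hQPu, hQQu, ← aux_LC1 (aux_QF_mem hP hu) (aux_QF_mem hQ hu)]
    refine setIntegral_congr_fun measurableSet_Ioo fun t ht => ?_
    simp only [aux_galois hP hu, aux_galois hQ hu]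
  have hmeasG : Measurable (Function.uncurry fun u t =>
      |(if u ≤ cdf P t then (1:ℝ) else 0) - (if u ≤ cdf Q t then 1 else 0)|) := by
    refine Measurable.abs (Measurable.sub ?_ ?_)
    · have hms : MeasurableSet {q : ℝ × ℝ | q.1 ≤ cdf P q.2} :=
        measurableSet_le measurable_fst ((aux_meas_cdf P).comp measurable_snd)
      exact Measurable.ite hms measurable_const measurable_const
    · have hms : MeasurableSet {q : ℝ × ℝ | q.1 ≤ cdf Q q.2} :=
        measurableSet_le measurable_fst ((aux_meas_cdf Q).comp measurable_snd)
      exact Measurable.ite hms measurable_const measurable_const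
  have hintG : Integrable (Function.uncurry fun u t =>
      |(if u ≤ cdf P t then (1:ℝ) else 0) - (if u ≤ cdf Q t then 1 else 0)|) (m.prod m) := by
    refine aux_integrable_of_bound _ hmeasG.aestronglyMeasurable 2 (.of_forall fun q => ?_)
    simp only [Function.uncurry, abs_abs]
    split_ifs <;> norm_num
  have hswap := MeasureTheory.integral_integral_swap hintG
  have hstep3 : ∀ t : ℝ, (∫ u in Set.Ioo (0:ℝ) 1,
      |(if u ≤ cdf P t then (1:ℝ) else 0) - (if u ≤ cdf Q t then 1 else 0)|)
      = |cdf P t - cdf Q t| := fun t =>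
    aux_LC2 ⟨cdf_nonneg P t, cdf_le_one P t⟩ ⟨cdf_nonneg Q t, cdf_le_one Q t⟩
  have hid : ∫ u, |QFb P u - QFb Q u| ∂m = ∫ t in Set.Ioo (0:ℝ) 1, |cdf P t - cdf Q t| := by
    rw [hstep1]
    calc ∫ u in Set.Ioo (0:ℝ) 1, (∫ t in Set.Ioo (0:ℝ) 1,
          |(if u ≤ cdf P t then (1:ℝ) else 0) - (if u ≤ cdf Q t then 1 else 0)|)
        = ∫ t in Set.Ioo (0:ℝ) 1, (∫ u in Set.Ioo (0:ℝ) 1,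
          |(if u ≤ cdf P t then (1:ℝ) else 0) - (if u ≤ cdf Q t then 1 else 0)|) := hswap
    _ = ∫ t in Set.Ioo (0:ℝ) 1, |cdf P t - cdf Q t| := by
        refine integral_congr_ae (Filter.Eventually.of_forall fun t => ?_)
        exact hstep3 t
  have hmem : (∫ p, |p.1 - p.2| ∂γ) ∈ {c : ℝ | ∃ γ' : Measure (ℝ × ℝ),
      γ'.map Prod.fst = P ∧ γ'.map Prod.snd = Q ∧ c = ∫ p, |p.1 - p.2| ∂γ'} :=
    ⟨γ, hfst, hsnd, rfl⟩
  calc kantorovich (fun x y => |x - y|) P Q ≤ ∫ p, |p.1 - p.2| ∂γ :=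
        csInf_le (aux_bdd_abs P Q) hmem
  _ = ∫ u, |QFb P u - QFb Q u| ∂m := hcost
  _ = ∫ t in Set.Ioo (0:ℝ) 1, |cdf P t - cdf Q t| := hid

lemma aux_dT_le [IsProbabilityMeasure μ] [IsProbabilityMeasure ν]
    (hμ : μ (Set.Ico 0 1) = 1) (hν : ν (Set.Ico 0 1) = 1) {s : ℝ} (hs : s ∈ Set.Ico (0:ℝ) 1)
    (f : ℝ → ℝ) (hf : Measurable f) (hfg : ∀ x ∈ Set.Ico (0:ℝ) 1, gmap s (f x) = x)
    (hf01 : ∀ x ∈ Set.Ico (0:ℝ) 1, f x ∈ Set.Icc (0:ℝ) 1) :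
    kantorovich rhoT μ ν ≤ kantorovich (fun x y => |x - y|) (μ.map f) (ν.map f) := by
  haveI hPp : IsProbabilityMeasure (μ.map f) := Measure.isProbabilityMeasure_map hf.aemeasurable
  haveI hQp : IsProbabilityMeasure (ν.map f) := Measure.isProbabilityMeasure_map hf.aemeasurable
  have hPsupp : μ.map f (Set.Icc 0 1) = 1 := by
    rw [Measure.map_apply hf measurableSet_Icc]
    refine le_antisymm prob_le_one ?_
    calc (1 : ENNReal) = μ (Set.Ico 0 1) := hμ.symm
    _ ≤ _ := measure_mono fun x hx => hf01 x hx
  have hQsupp : ν.map f (Set.Icc 0 1) = 1 := by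
    rw [Measure.map_apply hf measurableSet_Icc]
    refine le_antisymm prob_le_one ?_
    calc (1 : ENNReal) = ν (Set.Ico 0 1) := hν.symm
    _ ≤ _ := measure_mono fun x hx => hf01 x hx
  conv_rhs => rw [kantorovich]
  refine le_csInf ?_ ?_
  · exact aux_S_nonempty (fun x y => |x - y|) _ _
  rintro c ⟨γ, h1, h2, rfl⟩
  haveI hγprob : IsProbabilityMeasure γ := by
    constructor
    have h3 := Measure.map_apply (μ := γ) measurable_fst MeasurableSet.univ
    rw [h1, Set.preimage_univ] at h3
    rw [← h3]
    exact measure_univ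
  set g := gmap s with hgdef
  have hgm : Measurable (Prod.map g g) := (aux_meas_gmap s).prodMap (aux_meas_gmap s)
  set γ' := γ.map (Prod.map g g) with hγ'def
  have hmargs : ∀ (P : Measure ℝ), IsProbabilityMeasure P → P (Set.Ico 0 1) = 1 →
      γ.map Prod.fst = P.map f → γ'.map Prod.fst = P := by
    intro P hPp hPs hmap
    haveI := hPp
    rw [hγ'def, Measure.map_map measurable_fst hgm]
    have hc : (Prod.fst ∘ Prod.map g g) = g ∘ Prod.fst := rfl
    rw [hc, ← Measure.map_map (aux_meas_gmap s) measurable_fst, hmap,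
      Measure.map_map (aux_meas_gmap s) hf]
    have hnull : P (Set.Ico 0 1)ᶜ = 0 := by
      rw [measure_compl measurableSet_Ico (measure_ne_top P _), hPs]
      simp [measure_univ]
    have hae : (g ∘ f) =ᵐ[P] id := by
      rw [Filter.EventuallyEq, ae_iff]
      refine measure_mono_null (fun x hx => ?_) hnull
      simp only [Set.mem_setOf_eq, Function.comp_apply, id_eq] at hx
      intro hmem
      exact hx (hfg x hmem)
    rw [Measure.map_congr hae, Measure.map_id]
  have hm1 : γ'.map Prod.fst = μ := hmargs μ inferInstance hμ h1
  have hm2 : γ'.map Prod.snd = ν := by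
    rw [hγ'def, Measure.map_map measurable_snd hgm]
    have hc : (Prod.snd ∘ Prod.map g g) = g ∘ Prod.snd := rfl
    rw [hc, ← Measure.map_map (aux_meas_gmap s) measurable_snd, h2,
      Measure.map_map (aux_meas_gmap s) hf]
    have hnull : ν (Set.Ico 0 1)ᶜ = 0 := by
      rw [measure_compl measurableSet_Ico (measure_ne_top ν _), hν]
      simp [measure_univ]
    have hae : (g ∘ f) =ᵐ[ν] id := by
      rw [Filter.EventuallyEq, ae_iff]
      refine measure_mono_null (fun x hx => ?_) hnull
      simp only [Set.mem_setOf_eq, Function.comp_apply, id_eq] at hx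
      intro hmem
      exact hx (hfg x hmem)
    rw [Measure.map_congr hae, Measure.map_id]
  have hcost : ∫ p, rhoT p.1 p.2 ∂γ' = ∫ p, rhoT (g p.1) (g p.2) ∂γ := by
    rw [hγ'def, integral_map hgm.aemeasurable aux_meas_rhoT.aestronglyMeasurable]
    rfl
  have hae2 : ∀ᵐ p ∂γ, p.1 ∈ Set.Icc (0:ℝ) 1 ∧ p.2 ∈ Set.Icc (0:ℝ) 1 :=
    aux_ae_mem measurableSet_Icc h1 h2 hPsupp hQsupp
  have hmeasL : Measurable fun p : ℝ × ℝ => rhoT (g p.1) (g p.2) :=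
    aux_meas_rhoT.comp (((aux_meas_gmap s).comp measurable_fst).prodMk
      ((aux_meas_gmap s).comp measurable_snd))
  have hle : ∫ p, rhoT (g p.1) (g p.2) ∂γ ≤ ∫ p, |p.1 - p.2| ∂γ := by
    refine integral_mono_ae ?_ ?_ ?_
    · refine aux_integrable_of_bound _ hmeasL.aestronglyMeasurable 1 ?_
      filter_upwards [hae2] with p hp
      exact aux_rhoT_bound (aux_gmap_mem hs hp.1) (aux_gmap_mem hs hp.2)
    · refine aux_integrable_of_bound _
        ((measurable_fst.sub measurable_snd).abs).aestronglyMeasurable 2 ?_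
      filter_upwards [hae2] with p hp
      rw [abs_abs]
      obtain ⟨⟨ha0, ha1⟩, hb0, hb1⟩ := hp
      exact abs_le.mpr ⟨by linarith, by linarith⟩
    · filter_upwards [hae2] with p hp
      exact aux_rhoT_gmap_le hs hp.1 hp.2
  have hfinal : kantorovich rhoT μ ν ≤ ∫ p, rhoT p.1 p.2 ∂γ' := by
    rw [kantorovich]
    exact csInf_le (aux_bdd_rho hμ hν) ⟨γ', hm1, hm2, rfl⟩
  show kantorovich rhoT μ ν ≤ ∫ p, |p.1 - p.2| ∂γ
  calc kantorovich rhoT μ ν ≤ ∫ p, rhoT p.1 p.2 ∂γ' := hfinal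
  _ = ∫ p, rhoT (g p.1) (g p.2) ∂γ := hcost
  _ ≤ ∫ p, |p.1 - p.2| ∂γ := hle

lemma aux_phi_le_dT [IsProbabilityMeasure μ] [IsProbabilityMeasure ν]
    (hμ : μ (Set.Ico 0 1) = 1) (hν : ν (Set.Ico 0 1) = 1) {α : ℝ}
    (hα : ∀ β : ℝ, (∫ t in Set.Ioo (0:ℝ) 1, |(cdf μ t - cdf ν t) - α|)
        ≤ ∫ t in Set.Ioo (0:ℝ) 1, |(cdf μ t - cdf ν t) - β|) :
    (∫ t in Set.Ioo (0:ℝ) 1, |(cdf μ t - cdf ν t) - α|) ≤ kantorovich rhoT μ ν := by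
  rw [kantorovich]
  refine le_csInf (aux_S_nonempty _ _ _) ?_
  rintro c ⟨γ, h1, h2, rfl⟩
  haveI hγprob : IsProbabilityMeasure γ := by
    constructor
    have h3 := Measure.map_apply (μ := γ) measurable_fst MeasurableSet.univ
    rw [h1, Set.preimage_univ] at h3
    rw [← h3]
    exact measure_univ
  have hgmeas : Measurable (Function.uncurry fun (t : ℝ) (p : ℝ × ℝ) =>
      (if p.1 ≤ t then (1:ℝ) else 0) - (if p.2 ≤ t then 1 else 0) - cfun p) := by
    have hun : Function.uncurry (fun (t : ℝ) (p : ℝ × ℝ) =>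
        (if p.1 ≤ t then (1:ℝ) else 0) - (if p.2 ≤ t then 1 else 0) - cfun p)
        = fun q : ℝ × (ℝ × ℝ) =>
          (if q.2.1 ≤ q.1 then (1:ℝ) else 0) - (if q.2.2 ≤ q.1 then 1 else 0) - cfun q.2 := rfl
    rw [hun]
    refine Measurable.sub (Measurable.sub ?_ ?_) (aux_meas_cfun.comp measurable_snd)
    · exact Measurable.ite (measurableSet_le (measurable_fst.comp measurable_snd)
        measurable_fst) measurable_const measurable_const
    · exact Measurable.ite (measurableSet_le (measurable_snd.comp measurable_snd)
        measurable_fst) measurable_const measurable_const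
  have hbound : ∀ (t : ℝ) (p : ℝ × ℝ),
      |(if p.1 ≤ t then (1:ℝ) else 0) - (if p.2 ≤ t then 1 else 0) - cfun p| ≤ 3 := by
    intro t p
    have hc := aux_cfun_bound p
    have hd : |(if p.1 ≤ t then (1:ℝ) else 0) - (if p.2 ≤ t then 1 else 0)| ≤ 2 := by
      split_ifs <;> norm_num
    calc |(if p.1 ≤ t then (1:ℝ) else 0) - (if p.2 ≤ t then 1 else 0) - cfun p|
        ≤ |(if p.1 ≤ t then (1:ℝ) else 0) - (if p.2 ≤ t then 1 else 0)| + |cfun p| :=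
          abs_sub _ _
    _ ≤ 3 := by linarith
  have hswap := aux_swap_bound γ (fun (t : ℝ) (p : ℝ × ℝ) =>
    (if p.1 ≤ t then (1:ℝ) else 0) - (if p.2 ≤ t then 1 else 0) - cfun p) hgmeas 3 hbound
  have hic : Integrable cfun γ :=
    aux_integrable_of_bound _ aux_meas_cfun.aestronglyMeasurable 1
      (.of_forall aux_cfun_bound)
  have hH : ∀ t : ℝ, (∫ p, ((if p.1 ≤ t then (1:ℝ) else 0) - (if p.2 ≤ t then 1 else 0)
      - cfun p) ∂γ) = (cdf μ t - cdf ν t) - ∫ p, cfun p ∂γ := by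
    intro t
    have hi1 : Integrable (fun p : ℝ × ℝ => if p.1 ≤ t then (1:ℝ) else 0) γ := by
      refine aux_integrable_of_bound _ ((Measurable.ite (measurableSet_le measurable_fst
        measurable_const) measurable_const measurable_const).aestronglyMeasurable) 1
        (.of_forall fun p => ?_)
      split_ifs <;> norm_num
    have hi2 : Integrable (fun p : ℝ × ℝ => if p.2 ≤ t then (1:ℝ) else 0) γ := by
      refine aux_integrable_of_bound _ ((Measurable.ite (measurableSet_le measurable_snd
        measurable_const) measurable_const measurable_const).aestronglyMeasurable) 1
        (.of_forall fun p => ?_)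
      split_ifs <;> norm_num
    have e1 : ∫ p, (if p.1 ≤ t then (1:ℝ) else 0) ∂γ = cdf μ t := by
      have hind : (fun p : ℝ × ℝ => if p.1 ≤ t then (1:ℝ) else 0)
          = Set.indicator {p : ℝ × ℝ | p.1 ≤ t} (fun _ => 1) := by
        funext p
        by_cases hp : p.1 ≤ t <;> simp [Set.indicator_apply, hp]
      rw [hind, MeasureTheory.integral_indicator_const (1:ℝ)
        (measurableSet_le measurable_fst measurable_const)]
      have hms : γ {p : ℝ × ℝ | p.1 ≤ t} = μ (Set.Iic t) := by
        rw [← h1, Measure.map_apply measurable_fst measurableSet_Iic]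
        rfl
      rw [measureReal_def, hms, smul_eq_mul, mul_one, cdf_eq_toReal]
    have e2 : ∫ p, (if p.2 ≤ t then (1:ℝ) else 0) ∂γ = cdf ν t := by
      have hind : (fun p : ℝ × ℝ => if p.2 ≤ t then (1:ℝ) else 0)
          = Set.indicator {p : ℝ × ℝ | p.2 ≤ t} (fun _ => 1) := by
        funext p
        by_cases hp : p.2 ≤ t <;> simp [Set.indicator_apply, hp]
      rw [hind, MeasureTheory.integral_indicator_const (1:ℝ)
        (measurableSet_le measurable_snd measurable_const)]
      have hms : γ {p : ℝ × ℝ | p.2 ≤ t} = ν (Set.Iic t) := by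
        rw [← h2, Measure.map_apply measurable_snd measurableSet_Iic]
        rfl
      rw [measureReal_def, hms, smul_eq_mul, mul_one, cdf_eq_toReal]
    have hisub : Integrable (fun p : ℝ × ℝ =>
        (if p.1 ≤ t then (1:ℝ) else 0) - (if p.2 ≤ t then 1 else 0)) γ := hi1.sub hi2
    rw [integral_sub hisub hic, integral_sub hi1 hi2, e1, e2]
  have hae2 : ∀ᵐ p ∂γ, p.1 ∈ Set.Ico (0:ℝ) 1 ∧ p.2 ∈ Set.Ico (0:ℝ) 1 :=
    aux_ae_mem measurableSet_Ico h1 h2 hμ hν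
  have hRHS : (∫ p, (∫ t in Set.Ioo (0:ℝ) 1,
      |(if p.1 ≤ t then (1:ℝ) else 0) - (if p.2 ≤ t then 1 else 0) - cfun p|) ∂γ)
      = ∫ p, rhoT p.1 p.2 ∂γ := by
    refine integral_congr_ae ?_
    filter_upwards [hae2] with p hp
    exact aux_layer_rho hp.1 hp.2
  calc ∫ t in Set.Ioo (0:ℝ) 1, |(cdf μ t - cdf ν t) - α|
      ≤ ∫ t in Set.Ioo (0:ℝ) 1, |(cdf μ t - cdf ν t) - ∫ p, cfun p ∂γ| := hα _
  _ = ∫ t in Set.Ioo (0:ℝ) 1, |∫ p, ((if p.1 ≤ t then (1:ℝ) else 0)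
      - (if p.2 ≤ t then 1 else 0) - cfun p) ∂γ| := by
      refine setIntegral_congr_fun measurableSet_Ioo fun t ht => ?_
      rw [hH t]
  _ ≤ ∫ p, (∫ t in Set.Ioo (0:ℝ) 1,
      |(if p.1 ≤ t then (1:ℝ) else 0) - (if p.2 ≤ t then 1 else 0) - cfun p|) ∂γ := hswap
  _ = ∫ p, rhoT p.1 p.2 ∂γ := hRHS

lemma aux_exists_cut_value [IsProbabilityMeasure μ] [IsProbabilityMeasure ν]
    (hμ : μ (Set.Ico 0 1) = 1) (hν : ν (Set.Ico 0 1) = 1) {α : ℝ}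
    (happ : ∀ ε > (0:ℝ), ∃ t ∈ Set.Ioo (0:ℝ) 1, α - ε < cdf μ t - cdf ν t ∧ cdf μ t - cdf ν t ≤ α) :
    ∃ s ∈ Set.Ico (0:ℝ) 1, (cdf μ s - cdf ν s = α ∨ Fom μ s - Fom ν s = α) := by
  have hchoice : ∀ n : ℕ, ∃ t ∈ Set.Ioo (0:ℝ) 1,
      α - 1/(n+1) < cdf μ t - cdf ν t ∧ cdf μ t - cdf ν t ≤ α := fun n =>
    happ _ (by positivity)
  choose y hy1 hy2 using hchoice
  obtain ⟨x, hxmem, φ, hφmono, hφtend⟩ :=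
    (isCompact_Icc (a := (0:ℝ)) (b := 1)).tendsto_subseq
      (fun n => Set.Ioo_subset_Icc_self (hy1 n))
  have hlow : Tendsto (fun n : ℕ => α - 1/(n+1)) atTop (𝓝 α) := by
    have h0 := tendsto_one_div_add_atTop_nhds_zero_nat (𝕜 := ℝ)
    simpa using tendsto_const_nhds.sub h0
  have hHy : Tendsto (fun n => cdf μ (y n) - cdf ν (y n)) atTop (𝓝 α) :=
    tendsto_of_tendsto_of_tendsto_of_le_of_le hlow tendsto_const_nhds
      (fun n => (hy2 n).1.le) (fun n => (hy2 n).2)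
  have hHyφ : Tendsto (fun n => cdf μ (y (φ n)) - cdf ν (y (φ n))) atTop (𝓝 α) :=
    hHy.comp hφmono.tendsto_atTop
  by_cases hfreq : ∃ᶠ n in atTop, x ≤ y (φ n)
  · obtain ⟨ψ, hψmono, hψprop⟩ := Filter.extraction_of_frequently_atTop hfreq
    have htend2 : Tendsto (fun n => y (φ (ψ n))) atTop (𝓝 x) :=
      hφtend.comp hψmono.tendsto_atTop
    have hcdμ : Tendsto (fun n => cdf μ (y (φ (ψ n)))) atTop (𝓝 (cdf μ x)) :=
      aux_tendsto_cdf_right μ htend2 hψprop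
    have hcdν : Tendsto (fun n => cdf ν (y (φ (ψ n)))) atTop (𝓝 (cdf ν x)) :=
      aux_tendsto_cdf_right ν htend2 hψprop
    have huniq : cdf μ x - cdf ν x = α :=
      tendsto_nhds_unique (hcdμ.sub hcdν) (hHyφ.comp hψmono.tendsto_atTop)
    have hx1 : x < 1 := lt_of_le_of_lt (hψprop 0) (hy1 (φ (ψ 0))).2
    exact ⟨x, ⟨hxmem.1, hx1⟩, Or.inl huniq⟩
  · rw [Filter.not_frequently] at hfreq
    obtain ⟨ψ, hψmono, hψprop⟩ := Filter.extraction_of_frequently_atTop hfreq.frequently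
    have hlt : ∀ n, y (φ (ψ n)) < x := fun n => not_le.mp (hψprop n)
    have htend2 : Tendsto (fun n => y (φ (ψ n))) atTop (𝓝 x) :=
      hφtend.comp hψmono.tendsto_atTop
    have hcdμ : Tendsto (fun n => cdf μ (y (φ (ψ n)))) atTop (𝓝 (Fom μ x)) :=
      aux_tendsto_cdf_left μ htend2 hlt
    have hcdν : Tendsto (fun n => cdf ν (y (φ (ψ n)))) atTop (𝓝 (Fom ν x)) :=
      aux_tendsto_cdf_left ν htend2 hlt
    have huniq : Fom μ x - Fom ν x = α :=
      tendsto_nhds_unique (hcdμ.sub hcdν) (hHyφ.comp hψmono.tendsto_atTop)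
    rcases lt_or_ge x 1 with hx1 | hx1
    · exact ⟨x, ⟨hxmem.1, hx1⟩, Or.inr huniq⟩
    · have hx1' : x = 1 := le_antisymm hxmem.2 hx1
      have hFμ1 : Fom μ x = 1 := by
        rw [hx1', Fom]
        have : μ (Set.Iio 1) = 1 := by
          refine le_antisymm prob_le_one ?_
          calc (1 : ENNReal) = μ (Set.Ico 0 1) := hμ.symm
          _ ≤ μ (Set.Iio 1) := measure_mono fun z hz => hz.2
        rw [this]
        simp
      have hFν1 : Fom ν x = 1 := by
        rw [hx1', Fom]
        have : ν (Set.Iio 1) = 1 := by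
          refine le_antisymm prob_le_one ?_
          calc (1 : ENNReal) = ν (Set.Ico 0 1) := hν.symm
          _ ≤ ν (Set.Iio 1) := measure_mono fun z hz => hz.2
        rw [this]
        simp
      have hα0 : α = 0 := by rw [← huniq, hFμ1, hFν1]; ring
      have hFμ0 : Fom μ 0 = 0 := by
        rw [Fom]
        have : μ (Set.Iio 0) = 0 := by
          refine measure_mono_null (fun z hz => ?_)
            (aux_compl_null μ measurableSet_Ico hμ)
          simp only [Set.mem_compl_iff, Set.mem_Ico, not_and_or, not_le]
          exact Or.inl hz
        rw [this]
        simp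
      have hFν0 : Fom ν 0 = 0 := by
        rw [Fom]
        have : ν (Set.Iio 0) = 0 := by
          refine measure_mono_null (fun z hz => ?_)
            (aux_compl_null ν measurableSet_Ico hν)
          simp only [Set.mem_compl_iff, Set.mem_Ico, not_and_or, not_le]
          exact Or.inl hz
        rw [this]
        simp
      exact ⟨0, ⟨le_rfl, one_pos⟩, Or.inr (by rw [hFμ0, hFν0, hα0]; ring)⟩

end Main

open Set Filter Topology ProbabilityTheory in
lemma aux_main (μ ν : Measure ℝ) [IsProbabilityMeasure μ] [IsProbabilityMeasure ν]
    (hμ : μ (Set.Ico 0 1) = 1) (hν : ν (Set.Ico 0 1) = 1) :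
    IsLeast {r : ℝ | ∃ s ∈ Set.Ico (0:ℝ) 1,
        r = min (kantorovich (fun x y => |x - y|) (cutD μ s) (cutD ν s))
                (kantorovich (fun x y => |x - y|) (cutI μ s) (cutI ν s))}
      (kantorovich rhoT μ ν) := by
  have hHmeas : Measurable fun t => cdf μ t - cdf ν t := (aux_meas_cdf μ).sub (aux_meas_cdf ν)
  obtain ⟨α, hopt, happ⟩ := aux_exists_median _ hHmeas (aux_cdf_bound μ ν)
  obtain ⟨s, hsmem, hsval⟩ := aux_exists_cut_value hμ hν happ
  haveI hD1 : IsProbabilityMeasure (cutD μ s) := aux_prob_cutD μ s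
  haveI hD2 : IsProbabilityMeasure (cutD ν s) := aux_prob_cutD ν s
  haveI hI1 : IsProbabilityMeasure (cutI μ s) := aux_prob_cutI μ s
  haveI hI2 : IsProbabilityMeasure (cutI ν s) := aux_prob_cutI ν s
  have hdT_le : ∀ s' ∈ Set.Ico (0:ℝ) 1,
      kantorovich rhoT μ ν ≤
        min (kantorovich (fun x y => |x - y|) (cutD μ s') (cutD ν s'))
            (kantorovich (fun x y => |x - y|) (cutI μ s') (cutI ν s')) := by
    intro s' hs'
    refine le_min ?_ ?_
    · exact aux_dT_le hμ hν hs' _ (aux_meas_fD s') (aux_gmap_fD hs') (aux_fD_mem hs')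
    · exact aux_dT_le hμ hν hs' _ (aux_meas_fI s') (aux_gmap_fI hs') (aux_fI_mem hs')
  constructor
  · refine ⟨s, hsmem, ?_⟩
    have hub := hdT_le s hsmem
    have hlb : min (kantorovich (fun x y => |x - y|) (cutD μ s) (cutD ν s))
        (kantorovich (fun x y => |x - y|) (cutI μ s) (cutI ν s)) ≤ kantorovich rhoT μ ν := by
      rcases hsval with hval | hval
      · refine le_trans (min_le_left _ _) (le_trans
          (aux_kant_le (aux_cutD_supp hμ hsmem) (aux_cutD_supp hν hsmem)) ?_)
        rw [aux_cut_integral_D hμ hν hsmem, hval]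
        exact aux_phi_le_dT hμ hν hopt
      · refine le_trans (min_le_right _ _) (le_trans
          (aux_kant_le (aux_cutI_supp hμ hsmem) (aux_cutI_supp hν hsmem)) ?_)
        rw [aux_cut_integral_I hμ hν hsmem, hval]
        exact aux_phi_le_dT hμ hν hopt
    exact le_antisymm hub hlb
  · rintro r ⟨s', hs', rfl⟩
    exact hdT_le s' hs'

theorem stmt13 (μ ν : Measure ℝ) [IsProbabilityMeasure μ] [IsProbabilityMeasure ν]
    (hμ : μ (Set.Ico 0 1) = 1) (hν : ν (Set.Ico 0 1) = 1) :
    IsLeast {r : ℝ | ∃ s ∈ Set.Ico (0:ℝ) 1,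
        r = min (kantorovich (fun x y => |x - y|) (cutD μ s) (cutD ν s))
                (kantorovich (fun x y => |x - y|) (cutI μ s) (cutI ν s))}
      (kantorovich rhoT μ ν) :=
  aux_main μ ν hμ hν
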